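/- arXiv:2002.06903 — 5 statements merged into one kernel-verified Lean document; each statement's English description precedes it below -/
import Mathlib

section
/- Let A₁ and A₂ be disjoint closed subsets of M such that A₁ is a connected component of M. Then there exist disjoint compact subsets M₁ and M₂ of M such that A₁ ⊆ M₁, A₂ ⊆ M₂ and M = M₁ ∪ M₂. -/
open Set Topology

/-- A map `G` is compact on `B` if it is continuous on `B` and maps bounded closed
subsets of the ambient space contained in `B` to relatively compact sets. -/
def IsCompactMapOn {E F : Type*} [NormedAddCommGroup E] [NormedSpace ℝ E]
    [NormedAddCommGroup F] [NormedSpace ℝ F] (G : E → F) (B : Set E) : Prop :=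
  ContinuousOn G B ∧
    ∀ A : Set E, A ⊆ B → Bornology.IsBounded A → IsClosed A → IsCompact (closure (G '' A))

variable {X : Type*} [NormedAddCommGroup X] [NormedSpace ℝ X]

/-- The nonlinear map `F(x, λ) = x - λ K x - H (x, λ)`. -/
noncomputable def Fmap (K : X →L[ℝ] X) (H : X × ℝ → X) : X × ℝ → X :=
  fun p => p.1 - p.2 • K p.1 - H p

open Classical in
/-- The map `h(x, λ) = ‖x‖⁻¹ H(x,λ)` for `x ≠ 0`, `0` otherwise. -/
noncomputable def hmap (H : X × ℝ → X) : X × ℝ → X :=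
  fun p => if p.1 = 0 then 0 else ‖p.1‖⁻¹ • H p

/-- `μ` is a characteristic value of `K` if `μ⁻¹` is an eigenvalue of `K`. -/
def CharVal (K : X →L[ℝ] X) (μ : ℝ) : Prop :=
  Module.End.HasEigenvalue (K : X →ₗ[ℝ] X) μ⁻¹

/-- The multiplicity of a characteristic value `μ`: the dimension of the generalized
eigenspace `⋃_k ker((μ⁻¹ • I - K)^k)` of `K` for the eigenvalue `μ⁻¹`. -/
noncomputable def charMult (K : X →L[ℝ] X) (μ : ℝ) : ℕ :=
  Module.finrank ℝ (Module.End.maxGenEigenspace (K : X →ₗ[ℝ] X) μ⁻¹)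

/-- `𝔖(F)`: the closure in `Ω` of the set of non-trivial solutions of `F(x,λ) = 0`. -/
def SolClosure (F : X × ℝ → X) (Ω : Set (X × ℝ)) : Set (X × ℝ) :=
  closure {p | p ∈ Ω ∧ F p = 0 ∧ p.1 ≠ 0} ∩ Ω

/-- `C_{λ₀}(F)`: the connected component of `(0, λ₀)` in `𝔖(F) ∪ {(0, λ₀)}`. -/
noncomputable def Ccomp (F : X × ℝ → X) (Ω : Set (X × ℝ)) (lam0 : ℝ) : Set (X × ℝ) :=
  connectedComponentIn (SolClosure F Ω ∪ {((0 : X), lam0)}) ((0 : X), lam0)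

/-- `𝔛_{λ₀}(r) = {(x, μ) : ‖x‖ + |λ₀ - μ| < r}`. -/
def ball0 (X : Type*) [NormedAddCommGroup X] (lam0 r : ℝ) : Set (X × ℝ) :=
  {p | ‖p.1‖ + |lam0 - p.2| < r}

/-- The cone `𝔠_y⁺` (for `σ = 1`) resp. `𝔠_y⁻` (for `σ = -1`):
`{(x, λ) : σ l(x) > y ‖x‖}`. -/
def cone (l : X →L[ℝ] ℝ) (σ y : ℝ) : Set (X × ℝ) :=
  {p | y * ‖p.1‖ < σ * l p.1}

/-- The cone `𝔠_y = {(x, λ) : |l(x)| > y ‖x‖}`. -/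
def coneAbs (l : X →L[ℝ] ℝ) (y : ℝ) : Set (X × ℝ) :=
  {p | y * ‖p.1‖ < |l p.1|}

/-- A branch of solutions of `F(x,λ) = 0` at `(0, λ₀)` in the direction of `σ v`
(where `σ = ±1`): a connected subset `Q` of `C_{λ₀}(F)` containing `(0, λ₀)` such that
for every `y ∈ (0,1)` there is `ε_y > 0` with
`∅ ≠ Q ∩ ∂𝔛_{λ₀}(ε) ⊆ 𝔠_y^σ` for all `0 < ε < ε_y`. -/
def IsBranch (F : X × ℝ → X) (Ω : Set (X × ℝ)) (lam0 : ℝ) (l : X →L[ℝ] ℝ) (σ : ℝ)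
    (Q : Set (X × ℝ)) : Prop :=
  Q ⊆ Ccomp F Ω lam0 ∧ IsPreconnected Q ∧ ((0 : X), lam0) ∈ Q ∧
    ∀ y ∈ Ioo (0 : ℝ) 1, ∃ εy > 0, ∀ ε, 0 < ε → ε < εy →
      (Q ∩ frontier (ball0 X lam0 ε)).Nonempty ∧
        Q ∩ frontier (ball0 X lam0 ε) ⊆ cone l σ y

/-- `C_{λ₀}^κ(F)` for `κ = σ = ±1`: the closure in `Ω` of the union of `{(0, λ₀)}` and
all branches of solutions in the direction of `σ v`. -/
noncomputable def Cdir (F : X × ℝ → X) (Ω : Set (X × ℝ)) (lam0 : ℝ) (l : X →L[ℝ] ℝ)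
    (σ : ℝ) : Set (X × ℝ) :=
  closure ({((0 : X), lam0)} ∪ ⋃₀ {Q | IsBranch F Ω lam0 l σ Q}) ∩ Ω

/-- `C_{λ₀,ε}^κ` for `κ = σ = ±1`: the connected component of `(0, λ₀)` in
`C_{λ₀}(F) \ (𝔛_{λ₀}(ε) ∩ 𝔠_y^{-κ})`. -/
noncomputable def Cloc (F : X × ℝ → X) (Ω : Set (X × ℝ)) (lam0 : ℝ) (l : X →L[ℝ] ℝ)
    (y σ ε : ℝ) : Set (X × ℝ) :=
  connectedComponentIn (Ccomp F Ω lam0 \ (ball0 X lam0 ε ∩ cone l (-σ) y)) ((0 : X), lam0)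

/-- Clopen neighbourhoods of `x` form a directed family whose intersection is the connected
component of `x`, so by compactness one of them already lies in any open set containing it. -/
theorem exists_isClopen_mem_subset_of_connectedComponent_subset {α : Type*} [TopologicalSpace α]
    [T2Space α] [CompactSpace α] {x : α} {U : Set α} (hU : IsOpen U)
    (hxU : connectedComponent x ⊆ U) : ∃ s, IsClopen s ∧ x ∈ s ∧ s ⊆ U := by
  have hdir : Directed (· ⊇ ·) fun s : { s : Set α // IsClopen s ∧ x ∈ s } => s.val := by
    rintro ⟨s, hs, hxs⟩ ⟨t, ht, hxt⟩
    exact ⟨⟨s ∩ t, hs.inter ht, hxs, hxt⟩, inter_subset_left, inter_subset_right⟩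
  have hnhds : ∀ y ∈ ⋂ s : { s : Set α // IsClopen s ∧ x ∈ s }, s.val, U ∈ 𝓝 y := by
    rw [← connectedComponent_eq_iInter_isClopen]
    exact fun y hy => hU.mem_nhds (hxU hy)
  have : Nonempty { s : Set α // IsClopen s ∧ x ∈ s } := ⟨⟨univ, isClopen_univ, mem_univ x⟩⟩
  obtain ⟨⟨s, hs, hxs⟩, hsU⟩ :=
    exists_subset_nhds_of_compactSpace hdir (fun s => s.property.1.1) hnhds
  exact ⟨s, hs, hxs, hsU⟩

theorem whyburn_separation_general
    {M : Type*} [MetricSpace M] [CompactSpace M]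
    (A₁ A₂ : Set M) (h₂ : IsClosed A₂) (hdisj : Disjoint A₁ A₂)
    (hcomp : ∃ x : M, connectedComponent x = A₁) :
    ∃ M₁ M₂ : Set M, IsCompact M₁ ∧ IsCompact M₂ ∧ Disjoint M₁ M₂ ∧
      A₁ ⊆ M₁ ∧ A₂ ⊆ M₂ ∧ M₁ ∪ M₂ = Set.univ := by
  obtain ⟨x, rfl⟩ := hcomp
  obtain ⟨s, hs, hxs, hsA₂⟩ := exists_isClopen_mem_subset_of_connectedComponent_subset
    h₂.isOpen_compl hdisj.subset_compl_right
  exact ⟨s, sᶜ, hs.isClosed.isCompact, hs.compl.isClosed.isCompact, disjoint_compl_right,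
    hs.connectedComponent_subset hxs, subset_compl_comm.mp hsA₂, union_compl_self s⟩

/-- Whyburn. In a compact metric space `M`, if `A₁` and `A₂` are
disjoint closed subsets with `A₁` a connected component of `M`, then `M` splits into
disjoint compact sets `M₁ ⊇ A₁` and `M₂ ⊇ A₂`. -/
theorem whyburn_separation
    {M : Type*} [MetricSpace M] [CompactSpace M]
    (A₁ A₂ : Set M) (h₁ : IsClosed A₁) (h₂ : IsClosed A₂) (hdisj : Disjoint A₁ A₂)
    (hcomp : ∃ x : M, connectedComponent x = A₁) :
    ∃ M₁ M₂ : Set M, IsCompact M₁ ∧ IsCompact M₂ ∧ Disjoint M₁ M₂ ∧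
      A₁ ⊆ M₁ ∧ A₂ ⊆ M₂ ∧ M₁ ∪ M₂ = Set.univ :=
  whyburn_separation_general A₁ A₂ h₂ hdisj hcomp
end

section
/- Let κ ∈ {+,−} and 0 < ε₁ < S, and suppose C_{λ₀,ε₁}^κ ∩ ∂𝔛_{λ₀}(ε₁) ∩ closure(𝔠_y^{−κ}) ≠ ∅. Then for every 0 < ε < ε₁ the set Y_ε := (C_{λ₀,ε}^κ ∩ 𝔛_{λ₀}(ε₁) ∩ 𝔠_y^{−κ}) ∪ (∂𝔛_{λ₀}(ε₁) ∩ closure(𝔠_y^{−κ})) is connected. -/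
open Set Topology

variable {X : Type*} [NormedAddCommGroup X] [NormedSpace ℝ X]

/-!
The sphere part `∂𝔛_{λ₀}(ε₁) ∩ closure 𝔠_y^{−κ}` is connected: the closed cone is convex in `x`,
so the sphere part is the union of the two graphs `μ = λ₀ ± (ε₁ - ‖x‖)` over the convex set of its
points of norm at most `ε₁`, and these graphs meet at `μ = λ₀`.

Every point `q` of the other part is joined to the sphere part inside `Y_ε` by its component in
`K = C_{λ₀,ε}^κ ∩ (closure 𝔛_{λ₀}(ε₁) ∩ closure 𝔠_y^{−κ}) \ 𝔛_{λ₀}(ε)`. The set `K` is compact,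
because `F` is a compact perturbation of the identity, and it lies in the open cone, because
near `(0, λ₀)` the non-trivial solutions lie in `𝔠_y`. Since `C_{λ₀,ε}^κ` is connected and contains
`(0, λ₀) ∉ 𝔠_y^{−κ}`, boundary bumping forces the component of `q` in `K` to reach `∂𝔛_{λ₀}(ε₁)`.
-/

theorem exists_isClopen_subset_of_connectedComponent_subset {α : Type*} [TopologicalSpace α]
    [CompactSpace α] [T2Space α] {x : α} {U : Set α} (hU : IsOpen U)
    (h : connectedComponent x ⊆ U) : ∃ V, IsClopen V ∧ x ∈ V ∧ V ⊆ U := by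
  rw [connectedComponent_eq_iInter_isClopen] at h
  obtain ⟨u, hu⟩ := hU.isClosed_compl.isCompact.elim_finite_subfamily_closed
    (fun s : { s : Set α // IsClopen s ∧ x ∈ s } => (s : Set α)) (fun s => s.2.1.1)
    (by rwa [← disjoint_iff_inter_eq_empty, disjoint_compl_left_iff_subset])
  refine ⟨⋂ s ∈ u, (s : Set α), isClopen_biInter_finset fun s _ => s.2.1,
    mem_iInter₂.2 fun s _ => s.2.2, ?_⟩
  rwa [← disjoint_compl_left_iff_subset, disjoint_iff_inter_eq_empty]

/-- Boundary bumping: otherwise a clopen piece of `K` inside `U` containing `q` would be clopen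
in `C` as well. -/
theorem IsPreconnected.nonempty_connectedComponentIn_diff {α : Type*} [TopologicalSpace α]
    [T2Space α] {C K U : Set α} {q : α} (hC : IsPreconnected C) (hK : IsCompact K)
    (hKC : K ⊆ C) (hU : IsOpen U) (hCU : C ∩ U ⊆ K) (hCnU : ¬C ⊆ U) (hq : q ∈ K) :
    (_root_.connectedComponentIn K q \ U).Nonempty := by
  rw [sdiff_nonempty]
  intro hqU
  have : CompactSpace K := isCompact_iff_compactSpace.mp hK
  rw [connectedComponentIn_eq_image hq, image_subset_iff] at hqU
  obtain ⟨V, hV, hqV, hVU⟩ := exists_isClopen_subset_of_connectedComponent_subset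
    (hU.preimage continuous_subtype_val) hqU
  obtain ⟨O, hO, rfl⟩ := isOpen_induced_iff.mp hV.isOpen
  have hVclosed : IsClosed (K ∩ O) := by
    simpa using (hV.isClosed.isCompact.image continuous_subtype_val).isClosed
  have hCOU : C ∩ (O ∩ U) = K ∩ O := by
    ext p
    exact ⟨fun ⟨hpC, hpO, hpU⟩ => ⟨hCU ⟨hpC, hpU⟩, hpO⟩,
      fun ⟨hpK, hpO⟩ => ⟨hKC hpK, hpO, @hVU ⟨p, hpK⟩ hpO⟩⟩
  obtain ⟨p, hpC, hpU⟩ := not_subset.mp hCnU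
  obtain ⟨r, hrC, hrOU, hrV⟩ := hC (O ∩ U) (K ∩ O)ᶜ (hO.inter hU) hVclosed.isOpen_compl
    (fun r _ => by
      by_cases hr : r ∈ K ∩ O
      · exact .inl (hCOU.symm ▸ hr : r ∈ C ∩ (O ∩ U)).2
      · exact .inr hr)
    ⟨q, hKC hq, hqV, @hVU ⟨q, hq⟩ hqV⟩ ⟨p, hpC, fun hp => hpU (hCOU ▸ hp).2.2⟩
  exact hrV (hCOU ▸ ⟨hrC, hrOU⟩)

theorem isClosed_connectedComponentIn_inter {α : Type*} [TopologicalSpace α] {M T : Set α}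
    (x : α) (h : IsClosed (M ∩ T)) : IsClosed (connectedComponentIn M x ∩ T) := by
  by_cases hx : x ∈ M
  · have hcl : connectedComponentIn M x = M ∩ closure (connectedComponentIn M x) :=
      (subset_inter (connectedComponentIn_subset _ _) subset_closure).antisymm
        fun z ⟨hzM, hzc⟩ => (isPreconnected_connectedComponentIn.subset_closure
          (subset_insert z _) (insert_subset hzc subset_closure)).subset_connectedComponentIn
          (mem_insert_of_mem _ (mem_connectedComponentIn hx))
          (insert_subset hzM (connectedComponentIn_subset _ _)) (mem_insert z _)
    rw [hcl, inter_right_comm]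
    exact h.inter isClosed_closure
  · simp [connectedComponentIn_eq_empty hx]

theorem IsConnected.union_of_forall_exists {α : Type*} [TopologicalSpace α] {A P : Set α}
    (hP : IsConnected P)
    (h : ∀ a ∈ A, ∃ t ⊆ A ∪ P, a ∈ t ∧ (t ∩ P).Nonempty ∧ IsPreconnected t) :
    IsConnected (A ∪ P) := by
  obtain ⟨p, hp⟩ := hP.nonempty
  refine ⟨⟨p, .inr hp⟩, isPreconnected_of_forall p fun b hb => ?_⟩
  rcases hb with hb | hb
  · obtain ⟨t, htAP, hbt, htP, ht⟩ := h b hb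
    exact ⟨t ∪ P, union_subset htAP subset_union_right, .inr hp, .inl hbt, ht.union' htP hP.2⟩
  · exact ⟨P, subset_union_right, hp, hb, hP.2⟩

theorem IsPreconnected.isConnected_inter_union {α : Type*} [TopologicalSpace α] [T2Space α]
    {C K U P : Set α} (hC : IsPreconnected C) (hK : IsCompact K) (hKC : K ⊆ C) (hU : IsOpen U)
    (hCU : C ∩ U ⊆ K) (hCnU : ¬C ⊆ U) (hKUP : K ⊆ U ∪ P) (hP : IsConnected P) :
    IsConnected (C ∩ U ∪ P) := by
  refine hP.union_of_forall_exists fun q hq => ?_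
  have hqK := hCU hq
  have hcomp : _root_.connectedComponentIn K q ⊆ K := connectedComponentIn_subset _ _
  obtain ⟨r, hr, hrU⟩ := hC.nonempty_connectedComponentIn_diff hK hKC hU hCU hCnU hqK
  refine ⟨_root_.connectedComponentIn K q, fun p hp => ?_, mem_connectedComponentIn hqK,
    ⟨r, hr, (hKUP (hcomp hr)).resolve_left hrU⟩, isPreconnected_connectedComponentIn⟩
  exact (hKUP (hcomp hp)).imp (fun hpU => ⟨hKC (hcomp hp), hpU⟩) id

theorem isOpen_ball0 {X : Type*} [NormedAddCommGroup X] (lam0 r : ℝ) :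
    IsOpen (ball0 X lam0 r) :=
  isOpen_lt (by fun_prop) continuous_const

theorem isBounded_ball0 {X : Type*} [NormedAddCommGroup X] (lam0 r : ℝ) :
    Bornology.IsBounded (ball0 X lam0 r) :=
  (Metric.isBounded_ball (x := ((0 : X), lam0)) (r := r)).subset
    fun p (hp : ‖p.1‖ + |lam0 - p.2| < r) => by
      rw [Metric.mem_ball, Prod.dist_eq, dist_zero_right, Real.dist_eq, abs_sub_comm]
      exact max_lt (by linarith [abs_nonneg (lam0 - p.2)]) (by linarith [norm_nonneg p.1])

theorem frontier_ball0 (lam0 : ℝ) {r : ℝ} (hr : r ≠ 0) :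
    frontier (ball0 X lam0 r) = {p | ‖p.1‖ + |lam0 - p.2| = r} := by
  -- `ball0 X lam0 r` is a ball for the `ℓ¹` norm on `X × ℝ`
  let e : X × ℝ ≃ₜ WithLp 1 (X × ℝ) :=
    (WithLp.prodContinuousLinearEquiv 1 ℝ X ℝ).symm.toHomeomorph
  have hdist (p : X × ℝ) : dist (e p) (e (0, lam0)) = ‖p.1‖ + |lam0 - p.2| := by
    simp [e, dist_eq_norm, WithLp.prod_norm_eq_of_L1, abs_sub_comm]
  have hball : ball0 X lam0 r = e ⁻¹' Metric.ball (e (0, lam0)) r := by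
    ext p; simp only [ball0, mem_ofPred_eq, mem_preimage, Metric.mem_ball, hdist]
  rw [hball, ← e.preimage_frontier, frontier_ball _ hr]
  ext p; simp only [mem_preimage, Metric.mem_sphere, hdist, mem_ofPred_eq]

theorem isConnected_sphere0_inter {D : Set X} (hD : Convex ℝ D) {w : X} (hwD : w ∈ D) {r : ℝ}
    (hw : ‖w‖ = r) (lam0 : ℝ) :
    IsConnected ({p : X × ℝ | ‖p.1‖ + |lam0 - p.2| = r} ∩ Prod.fst ⁻¹' D) := by
  set E := D ∩ Metric.closedBall 0 r
  have hE : IsConnected E :=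
    ⟨⟨w, hwD, by simp [hw]⟩, ((hD.inter (convex_closedBall 0 r)).isPreconnected)⟩
  let graph (s : ℝ) (x : X) : X × ℝ := (x, lam0 + s * (r - ‖x‖))
  have hgraph (s : ℝ) : IsConnected (graph s '' E) := hE.image _ (by fun_prop)
  have hsphere : {p : X × ℝ | ‖p.1‖ + |lam0 - p.2| = r} ∩ Prod.fst ⁻¹' D =
      graph 1 '' E ∪ graph (-1) '' E := by
    ext ⟨x, μ⟩
    simp only [mem_inter_iff, mem_ofPred_eq, mem_preimage, mem_union, mem_image, graph,
      Prod.mk.injEq, Metric.mem_closedBall, dist_zero_right, E]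
    constructor
    · rintro ⟨hxμ, hx⟩
      have hxr : ‖x‖ ≤ r := by linarith [abs_nonneg (lam0 - μ)]
      rcases le_total lam0 μ with hμ | hμ
      · rw [abs_of_nonpos (by linarith)] at hxμ
        exact .inl ⟨x, ⟨hx, hxr⟩, rfl, by linarith⟩
      · rw [abs_of_nonneg (by linarith)] at hxμ
        exact .inr ⟨x, ⟨hx, hxr⟩, rfl, by linarith⟩
    · rintro (⟨x, ⟨hx, hxr⟩, rfl, rfl⟩ | ⟨x, ⟨hx, hxr⟩, rfl, rfl⟩)
      · exact ⟨by rw [abs_of_nonpos (by linarith)]; ring, hx⟩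
      · exact ⟨by rw [abs_of_nonneg (by linarith)]; ring, hx⟩
  have hwE : w ∈ E := ⟨hwD, by simp [hw]⟩
  have hw_graph (s : ℝ) : (w, lam0) ∈ graph s '' E := ⟨w, hwE, by simp [graph, hw]⟩
  rw [hsphere]
  exact IsConnected.union ⟨_, hw_graph 1, hw_graph (-1)⟩ (hgraph 1) (hgraph (-1))

theorem isOpen_cone (l : X →L[ℝ] ℝ) (σ y : ℝ) : IsOpen (cone l σ y) :=
  isOpen_lt (by fun_prop) (by fun_prop)

theorem closure_cone {l : X →L[ℝ] ℝ} {σ y : ℝ} (hy : 0 ≤ y) {w : X}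
    (hw : y * ‖w‖ < σ * l w) : closure (cone l σ y) = {p | y * ‖p.1‖ ≤ σ * l p.1} := by
  refine (closure_lt_subset_le (f := fun p : X × ℝ => y * ‖p.1‖)
    (g := fun p => σ * l p.1) (by fun_prop) (by fun_prop)).antisymm fun p hp => ?_
  have hcont : Continuous fun s : ℝ => p + (s • w, (0 : ℝ)) := by fun_prop
  have hlim : Filter.Tendsto (fun s : ℝ => p + (s • w, (0 : ℝ))) (𝓝[>] 0) (𝓝 p) := by
    simpa only [zero_smul, Prod.mk_zero_zero, add_zero] using
      (hcont.tendsto 0).mono_left (nhdsWithin_le_nhds (s := Ioi 0))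
  refine mem_closure_of_tendsto hlim (eventually_nhdsWithin_of_forall fun s (hs : 0 < s) => ?_)
  have hnorm : ‖p.1 + s • w‖ ≤ ‖p.1‖ + s * ‖w‖ := by
    simpa [norm_smul, abs_of_pos hs] using norm_add_le p.1 (s • w)
  have hp : y * ‖p.1‖ ≤ σ * l p.1 := hp
  show y * ‖p.1 + s • w‖ < σ * l (p.1 + s • w)
  rw [map_add, map_smul, smul_eq_mul]
  nlinarith [mul_le_mul_of_nonneg_left hnorm hy]

theorem convex_setOf_mul_norm_le (l : X →L[ℝ] ℝ) (σ : ℝ) {y : ℝ} (hy : 0 ≤ y) :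
    Convex ℝ {x : X | y * ‖x‖ ≤ σ * l x} := by
  have hconv : ConvexOn ℝ univ fun x : X => y * ‖x‖ - σ * l x :=
    ((convexOn_norm convex_univ).smul hy).sub
      (((σ • l : X →L[ℝ] ℝ) : X →ₗ[ℝ] ℝ).concaveOn convex_univ)
  simpa using hconv.convex_le 0

theorem isConnected_frontier_ball0_inter_closure_cone {l : X →L[ℝ] ℝ} {σ y : ℝ} (hy : 0 ≤ y)
    {w : X} (hw : y * ‖w‖ < σ * l w) (lam0 : ℝ) {r : ℝ} (hr : 0 < r) :
    IsConnected (frontier (ball0 X lam0 r) ∩ closure (cone l σ y)) := by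
  have hw0 : 0 < ‖w‖ := norm_pos_iff.2 fun h => by simp [h] at hw
  have hc : 0 ≤ r / ‖w‖ := by positivity
  rw [frontier_ball0 lam0 hr.ne', closure_cone hy hw]
  refine isConnected_sphere0_inter (convex_setOf_mul_norm_le l σ hy) (w := (r / ‖w‖) • w)
    (show y * ‖(r / ‖w‖) • w‖ ≤ σ * l ((r / ‖w‖) • w) from ?_) ?_ lam0
  · rw [norm_smul, map_smul, smul_eq_mul, Real.norm_of_nonneg hc, mul_left_comm,
      mul_left_comm σ]
    exact mul_le_mul_of_nonneg_left hw.le hc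
  · rw [norm_smul, Real.norm_of_nonneg hc, div_mul_cancel₀ _ hw0.ne']

theorem mem_cone_of_mem_coneAbs {l : X →L[ℝ] ℝ} {σ y : ℝ} (hσ : |σ| = 1) (hy : 0 ≤ y)
    {p : X × ℝ} (hp : p ∈ coneAbs l y) (hle : y * ‖p.1‖ ≤ σ * l p.1) : p ∈ cone l σ y := by
  refine lt_of_le_of_ne hle fun h => (show y * ‖p.1‖ < |l p.1| from hp).ne' ?_
  rw [← one_mul |l p.1|, ← hσ, ← abs_mul, ← h, abs_of_nonneg (by positivity)]

theorem isCompact_closure_solutions_inter {K : X →L[ℝ] X} (hK : IsCompactOperator K)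
    {H : X × ℝ → X} {Ω A : Set (X × ℝ)} (hH : IsCompactMapOn H Ω)
    (hAb : Bornology.IsBounded A) (hAc : IsClosed A) (hAΩ : A ⊆ Ω) :
    IsCompact (closure {p | p ∈ Ω ∧ Fmap K H p = 0 ∧ p.1 ≠ 0} ∩ A) := by
  set Z := closure {p | p ∈ Ω ∧ Fmap K H p = 0 ∧ p.1 ≠ 0} ∩ A
  have hF : ContinuousOn (Fmap K H) Ω := (Continuous.continuousOn (by fun_prop)).sub hH.1
  have hZ_fixed (p : X × ℝ) (hp : p ∈ Z) : p.1 = p.2 • K p.1 + H p := by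
    have hF0 : Fmap K H p ∈ closure {0} :=
      closure_mono (image_subset_iff.2 fun q hq => hq.2.1)
        (((hF p (hAΩ hp.2)).mono fun q hq => hq.1).mem_closure_image hp.1)
    rwa [closure_singleton, mem_singleton_iff, Fmap, sub_sub, sub_eq_zero] at hF0
  set s := closure (Prod.snd '' A)
  have hs : IsCompact s := hAb.image_snd.isCompact_closure
  have hKA : IsCompact (closure (K '' (Prod.fst '' A))) :=
    (show IsCompactOperator (K : X →ₗ[ℝ] X) from hK).isCompact_closure_image_of_bounded
      hAb.image_fst
  have hHZ : IsCompact (closure (H '' Z)) :=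
    hH.2 Z (fun p hp => hAΩ hp.2) (hAb.subset inter_subset_right)
      (isClosed_closure.inter hAc)
  refine (((hs.smul_set hKA).add hHZ).prod hs).of_isClosed_subset
    (isClosed_closure.inter hAc) fun p hp => ⟨?_, subset_closure ⟨p, hp.2, rfl⟩⟩
  rw [hZ_fixed p hp]
  exact add_mem_add (smul_mem_smul (subset_closure ⟨p, hp.2, rfl⟩)
    (subset_closure ⟨p.1, ⟨p, hp.2, rfl⟩, rfl⟩)) (subset_closure ⟨p, hp, rfl⟩)

theorem isClosed_Ccomp_inter {X : Type*} [NormedAddCommGroup X] (F : X × ℝ → X)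
    {Ω T : Set (X × ℝ)} (lam0 : ℝ) (hT : IsClosed T) (hTΩ : T ⊆ Ω) :
    IsClosed (Ccomp F Ω lam0 ∩ T) := by
  refine isClosed_connectedComponentIn_inter _ ?_
  rw [SolClosure, union_inter_distrib_right, inter_assoc, inter_eq_right.2 hTΩ,
    ← union_inter_distrib_right]
  exact (isClosed_closure.union isClosed_singleton).inter hT

theorem isClosed_Cloc_inter (F : X × ℝ → X) {Ω T : Set (X × ℝ)} (lam0 : ℝ) (l : X →L[ℝ] ℝ)
    (y σ ε : ℝ) (hT : IsClosed T) (hTΩ : T ⊆ Ω) : IsClosed (Cloc F Ω lam0 l y σ ε ∩ T) := by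
  refine isClosed_connectedComponentIn_inter _ ?_
  rw [← inter_sdiff_right_comm, inter_sdiff_assoc]
  exact isClosed_Ccomp_inter F lam0
    (hT.sdiff ((isOpen_ball0 lam0 ε).inter (isOpen_cone l _ y))) (sdiff_subset.trans hTΩ)

theorem Cloc_subset_SolClosure_union (F : X × ℝ → X) (Ω : Set (X × ℝ)) (lam0 : ℝ)
    (l : X →L[ℝ] ℝ) (y σ ε : ℝ) :
    Cloc F Ω lam0 l y σ ε ⊆ SolClosure F Ω ∪ {((0 : X), lam0)} :=
  (connectedComponentIn_subset _ _).trans (sdiff_subset.trans (connectedComponentIn_subset _ _))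

theorem mk_zero_notMem_cone (l : X →L[ℝ] ℝ) (σ y μ : ℝ) : ((0 : X), μ) ∉ cone l σ y := by
  simp [cone]

theorem mem_Cloc_self (F : X × ℝ → X) (Ω : Set (X × ℝ)) (lam0 : ℝ) (l : X →L[ℝ] ℝ)
    (y σ ε : ℝ) : ((0 : X), lam0) ∈ Cloc F Ω lam0 l y σ ε :=
  mem_connectedComponentIn
    ⟨mem_connectedComponentIn (.inr rfl), fun h => mk_zero_notMem_cone l _ y lam0 h.2⟩

theorem isCompact_Cloc_inter {K : X →L[ℝ] X} (hK : IsCompactOperator K) {H : X × ℝ → X}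
    {Ω T : Set (X × ℝ)} (hH : IsCompactMapOn H Ω) (lam0 : ℝ) (l : X →L[ℝ] ℝ) (y σ ε : ℝ)
    (hTb : Bornology.IsBounded T) (hTc : IsClosed T) (hTΩ : T ⊆ Ω) :
    IsCompact (Cloc (Fmap K H) Ω lam0 l y σ ε ∩ T) := by
  refine ((isCompact_closure_solutions_inter hK hH hTb hTc hTΩ).union
    (isCompact_singleton (x := ((0 : X), lam0)))).of_isClosed_subset
    (isClosed_Cloc_inter _ lam0 l y σ ε hTc hTΩ) ?_
  rintro p ⟨hpC, hpT⟩
  rcases Cloc_subset_SolClosure_union _ Ω lam0 l y σ ε hpC with hp | hp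
  exacts [.inl ⟨hp.1, hpT⟩, .inr hp]

theorem Cloc_inter_subset_cone {F : X × ℝ → X} {Ω A : Set (X × ℝ)} {lam0 : ℝ}
    {l : X →L[ℝ] ℝ} {y σ ε : ℝ} (hσ : |σ| = 1) (hy : 0 ≤ y) (hε : 0 < ε)
    (hA : (SolClosure F Ω ∩ A) \ {((0 : X), lam0)} ⊆ coneAbs l y) :
    Cloc F Ω lam0 l y σ ε ∩ ((A ∩ closure (cone l (-σ) y)) \ ball0 X lam0 ε) ⊆
      cone l (-σ) y := by
  rintro p ⟨hpC, ⟨hpA, hpc⟩, hpε⟩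
  have hp_ne : p ≠ ((0 : X), lam0) := by rintro rfl; exact hpε (by simpa [ball0] using hε)
  have hpS := (Cloc_subset_SolClosure_union _ _ _ _ _ _ _ hpC).resolve_right hp_ne
  exact mem_cone_of_mem_coneAbs (by rwa [abs_neg]) hy (hA ⟨⟨hpS, hpA⟩, hp_ne⟩)
    (closure_lt_subset_le (f := fun p : X × ℝ => y * ‖p.1‖) (g := fun p => -σ * l p.1)
      (by fun_prop) (by fun_prop) hpc)

theorem connected_Y_eps_general
    {X : Type*} [NormedAddCommGroup X] [NormedSpace ℝ X]
    (lam0 : ℝ) (Ω : Set (X × ℝ))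
    (K : X →L[ℝ] X) (hK : IsCompactOperator K)
    (H : X × ℝ → X) (hH : IsCompactMapOn H Ω)
    (v : X) (hv : ‖v‖ = 1)
    (l : X →L[ℝ] ℝ) (hlv : l v = 1)
    (y : ℝ) (hy : y ∈ Ioo (0 : ℝ) 1) (S : ℝ)
    (hSΩ : closure (ball0 X lam0 S) ⊆ interior Ω)
    (hScone : (SolClosure (Fmap K H) Ω ∩ closure (ball0 X lam0 S)) \ {((0 : X), lam0)}
      ⊆ coneAbs l y)
    (σ : ℝ) (hσ : σ = 1 ∨ σ = -1) (ε₁ : ℝ) (hε₁0 : 0 < ε₁) (hε₁S : ε₁ < S) :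
    ∀ ε : ℝ, 0 < ε → ε < ε₁ →
      IsConnected
        ((Cloc (Fmap K H) Ω lam0 l y σ ε ∩ ball0 X lam0 ε₁ ∩ cone l (-σ) y) ∪
          (frontier (ball0 X lam0 ε₁) ∩ closure (cone l (-σ) y))) := by
  intro ε hε _
  have hσabs : |σ| = 1 := by rcases hσ with rfl | rfl <;> norm_num
  have hv_cone : y * ‖(-σ) • v‖ < -σ * l ((-σ) • v) := by
    rcases hσ with rfl | rfl <;> simpa [norm_smul, hv, hlv] using hy.2
  set C := Cloc (Fmap K H) Ω lam0 l y σ ε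
  set T := (closure (ball0 X lam0 ε₁) ∩ closure (cone l (-σ) y)) \ ball0 X lam0 ε
  have hball_S : closure (ball0 X lam0 ε₁) ⊆ closure (ball0 X lam0 S) :=
    closure_mono fun p (hp : _ < ε₁) => (show _ < S from hp.trans hε₁S)
  have hCT_cone : C ∩ T ⊆ cone l (-σ) y := Cloc_inter_subset_cone hσabs hy.1.le hε
    ((sdiff_subset_sdiff_left (inter_subset_inter_right _ hball_S)).trans hScone)
  have hCT_compact : IsCompact (C ∩ T) :=
    isCompact_Cloc_inter hK hH lam0 l y σ ε ((isBounded_ball0 lam0 ε₁).closure.subset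
      fun p hp => hp.1.1) ((isClosed_closure.inter isClosed_closure).sdiff
      (isOpen_ball0 _ _)) fun p hp => interior_subset (hSΩ (hball_S hp.1.1))
  have hCU : C ∩ (ball0 X lam0 ε₁ ∩ cone l (-σ) y) ⊆ C ∩ T := fun p ⟨hpC, hpB, hpc⟩ =>
    ⟨hpC, ⟨subset_closure hpB, subset_closure hpc⟩,
      fun h => (connectedComponentIn_subset _ _ hpC).2 ⟨h, hpc⟩⟩
  have hC_not : ¬C ⊆ ball0 X lam0 ε₁ ∩ cone l (-σ) y := fun h =>
    mk_zero_notMem_cone l _ y lam0 (h (mem_Cloc_self _ Ω lam0 l y σ ε)).2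
  have hCT_split : C ∩ T ⊆ (ball0 X lam0 ε₁ ∩ cone l (-σ) y) ∪
      (frontier (ball0 X lam0 ε₁) ∩ closure (cone l (-σ) y)) := by
    intro p hp
    by_cases hpB : p ∈ ball0 X lam0 ε₁
    · exact .inl ⟨hpB, hCT_cone hp⟩
    · exact .inr ⟨⟨hp.2.1.1, by rwa [(isOpen_ball0 _ _).interior_eq]⟩, hp.2.1.2⟩
  rw [inter_assoc]
  exact isPreconnected_connectedComponentIn.isConnected_inter_union hCT_compact
    inter_subset_left ((isOpen_ball0 _ _).inter (isOpen_cone _ _ _)) hCU hC_not hCT_split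
    (isConnected_frontier_ball0_inter_closure_cone hy.1.le hv_cone lam0 hε₁0)

/-- If `C_{λ₀,ε₁}^κ ∩ ∂𝔛_{λ₀}(ε₁) ∩ closure(𝔠_y^{−κ}) ≠ ∅`, then
for every `0 < ε < ε₁` the set
`Y_ε = (C_{λ₀,ε}^κ ∩ 𝔛_{λ₀}(ε₁) ∩ 𝔠_y^{−κ}) ∪ (∂𝔛_{λ₀}(ε₁) ∩ closure(𝔠_y^{−κ}))` is
connected. -/
theorem connected_Y_eps
    {X : Type*} [NormedAddCommGroup X] [NormedSpace ℝ X] [CompleteSpace X]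
    (lam0 : ℝ) (Ω : Set (X × ℝ)) (hΩ : Ω ∈ 𝓝 ((0 : X), lam0))
    (K : X →L[ℝ] X) (hK : IsCompactOperator K)
    (H : X × ℝ → X) (hH : IsCompactMapOn H Ω) (hh : ContinuousOn (hmap H) Ω)
    (hchar : CharVal K lam0) (hsimple : charMult K lam0 = 1)
    (v : X) (hv : ‖v‖ = 1) (hKv : K v = lam0⁻¹ • v)
    (l : X →L[ℝ] ℝ) (hl : ∀ x : X, l (K x) = lam0⁻¹ * l x) (hlv : l v = 1)
    (y : ℝ) (hy : y ∈ Ioo (0 : ℝ) 1) (S : ℝ) (hS0 : 0 < S)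
    (hSΩ : closure (ball0 X lam0 S) ⊆ interior Ω)
    (hScone : (SolClosure (Fmap K H) Ω ∩ closure (ball0 X lam0 S)) \ {((0 : X), lam0)}
      ⊆ coneAbs l y)
    (σ : ℝ) (hσ : σ = 1 ∨ σ = -1) (ε₁ : ℝ) (hε₁0 : 0 < ε₁) (hε₁S : ε₁ < S)
    (hne : (Cloc (Fmap K H) Ω lam0 l y σ ε₁ ∩ frontier (ball0 X lam0 ε₁) ∩
      closure (cone l (-σ) y)).Nonempty) :
    ∀ ε : ℝ, 0 < ε → ε < ε₁ →
      IsConnected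
        ((Cloc (Fmap K H) Ω lam0 l y σ ε ∩ ball0 X lam0 ε₁ ∩ cone l (-σ) y) ∪
          (frontier (ball0 X lam0 ε₁) ∩ closure (cone l (-σ) y))) :=
  connected_Y_eps_general lam0 Ω K hK H hH v hv l hlv y hy S hSΩ hScone σ hσ ε₁ hε₁0 hε₁S
end

section
/- Suppose Ω ≠ 𝔛, C_{λ₀}(F) is bounded, and the closure of C_{λ₀}(F) in 𝔛 is disjoint from ∂Ω. For δ > 0 set Ω_δ = {p ∈ Ω : dist(p, ∂Ω) > δ} and let δ > 0 be small enough that Ω_δ is a neighbourhood of (0,λ₀), the closure of Ω_δ in 𝔛 is contained in Ω, and C_{λ₀}(F) ⊆ Ω_δ. Let F̃ : 𝔛 → X be any map of the form F̃(x,λ) = x − λ·Kx − H̃(x,λ), where H̃ : 𝔛 → X is compact, the map (x,λ) ↦ ‖x‖⁻¹·H̃(x,λ) for x ≠ 0 extended by 0 at x = 0 is continuous, and F̃ agrees with F on the closure of Ω_δ. Then C_{λ₀}(F) = C_{λ₀}(F restricted to the closure of Ω_δ) = C_{λ₀}(F̃). -/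
open Set Topology

variable {X : Type*} [NormedAddCommGroup X] [NormedSpace ℝ X]

/-- `Ω_δ = {p ∈ Ω : dist(p, ∂Ω) > δ}`. -/
noncomputable def Omdelta {X : Type*} [NormedAddCommGroup X] (Ω : Set (X × ℝ)) (δ : ℝ) :
    Set (X × ℝ) :=
  {p ∈ Ω | δ < Metric.infDist p (frontier Ω)}

section AuxLemmas

open Pointwise

variable {X : Type*} [NormedAddCommGroup X] [NormedSpace ℝ X]

private lemma zeros_of_closure {F : X × ℝ → X} {Ω' T : Set (X × ℝ)}
    (hF : ContinuousOn F Ω') (hT : ∀ q ∈ T, q ∈ Ω' ∧ F q = 0) {p : X × ℝ}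
    (hp : p ∈ closure T) (hpΩ : p ∈ Ω') : F p = 0 := by
  have hne : (𝓝[T] p).NeBot := mem_closure_iff_nhdsWithin_neBot.mp hp
  have h1 : Filter.Tendsto F (𝓝[T] p) (𝓝 (F p)) :=
    (hF p hpΩ).mono_left (nhdsWithin_mono p fun q hq => (hT q hq).1)
  have h2 : Filter.Tendsto F (𝓝[T] p) (𝓝 0) := by
    refine Filter.Tendsto.congr' ?_ tendsto_const_nhds
    exact eventually_nhdsWithin_of_forall fun q hq => ((hT q hq).2).symm
  exact tendsto_nhds_unique h1 h2

private lemma isCompact_of_sol (K : X →L[ℝ] X) (hK : IsCompactOperator K)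
    {H : X × ℝ → X} {Ω' : Set (X × ℝ)} (hH : IsCompactMapOn H Ω')
    {C : Set (X × ℝ)} (hCcl : IsClosed C) (hCb : Bornology.IsBounded C) (hCΩ : C ⊆ Ω')
    (p₀ : X × ℝ) (hz : ∀ p ∈ C, p ≠ p₀ → Fmap K H p = 0) : IsCompact C := by
  obtain ⟨M, hM⟩ := isBounded_iff_forall_norm_le.mp hCb
  have hK' : IsCompactOperator (K : X →ₗ[ℝ] X) := hK
  set B1 : Set X := Prod.fst '' C with hB1def
  have hB1 : Bornology.IsBounded B1 := by
    rw [isBounded_iff_forall_norm_le]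
    refine ⟨M, ?_⟩
    rintro x ⟨p, hp, rfl⟩
    exact (norm_fst_le p).trans (hM p hp)
  have hKB : IsCompact (closure ((K : X →ₗ[ℝ] X) '' B1)) :=
    hK'.isCompact_closure_image_of_bounded hB1
  have hQ1 : IsCompact ((fun q : ℝ × X => q.1 • q.2) ''
      (Set.Icc (-M) M ×ˢ closure ((K : X →ₗ[ℝ] X) '' B1))) :=
    (isCompact_Icc.prod hKB).image (continuous_fst.smul continuous_snd)
  have hQ2 : IsCompact (closure (H '' C)) := hH.2 C hCΩ hCb hCcl
  have hbig : IsCompact (((((fun q : ℝ × X => q.1 • q.2) ''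
        (Set.Icc (-M) M ×ˢ closure ((K : X →ₗ[ℝ] X) '' B1))) + closure (H '' C)) ×ˢ
        Set.Icc (-M) M) ∪ {p₀}) :=
    ((hQ1.add hQ2).prod isCompact_Icc).union isCompact_singleton
  refine IsCompact.of_isClosed_subset hbig hCcl ?_
  intro p hp
  by_cases hp0 : p = p₀
  · exact Or.inr (by simp [hp0])
  · left
    have h0 : p.1 - p.2 • K p.1 - H p = 0 := hz p hp hp0
    rw [sub_sub, sub_eq_zero] at h0
    have hn2 : |p.2| ≤ M := by
      have := (norm_snd_le p).trans (hM p hp)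
      rwa [Real.norm_eq_abs] at this
    refine Set.mem_prod.mpr ⟨?_, ?_⟩
    · have h1 : p.2 • K p.1 ∈ (fun q : ℝ × X => q.1 • q.2) ''
          (Set.Icc (-M) M ×ˢ closure ((K : X →ₗ[ℝ] X) '' B1)) := by
        refine ⟨(p.2, K p.1), ⟨?_, subset_closure ⟨p.1, ⟨p, hp, rfl⟩, rfl⟩⟩, rfl⟩
        exact Set.mem_Icc.mpr (abs_le.mp hn2)
      have h2 : H p ∈ closure (H '' C) := subset_closure ⟨p, hp, rfl⟩
      have := Set.add_mem_add h1 h2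
      rwa [← h0] at this
    · exact Set.mem_Icc.mpr (abs_le.mp hn2)

private lemma isOpen_Omdelta {Ω : Set (X × ℝ)} {δ : ℝ} (hδ : 0 < δ) :
    IsOpen (Omdelta Ω δ) := by
  have heq : Omdelta Ω δ = {p | δ < Metric.infDist p (frontier Ω)} ∩ interior Ω := by
    ext p
    constructor
    · rintro ⟨hpΩ, hpd⟩
      refine ⟨hpd, ?_⟩
      by_contra hni
      have hfr : p ∈ frontier Ω := ⟨subset_closure hpΩ, hni⟩
      have h0 : Metric.infDist p (frontier Ω) = 0 := Metric.infDist_zero_of_mem hfr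
      rw [h0] at hpd
      linarith
    · rintro ⟨h1, h2⟩
      exact ⟨interior_subset h2, h1⟩
  rw [heq]
  exact (isOpen_lt continuous_const (Metric.continuous_infDist_pt _)).inter isOpen_interior

end AuxLemmas

/-- If `C_{λ₀}(F)` is bounded with closure disjoint from `∂Ω`, and
`δ > 0` is small enough, then `C_{λ₀}(F)` coincides with the corresponding components
for the restriction of `F` to the closure of `Ω_δ` and for any globally defined
extension `F̃` of that restriction of the same form. -/
theorem reduction_to_global
    {X : Type*} [NormedAddCommGroup X] [NormedSpace ℝ X] [CompleteSpace X]
    (lam0 : ℝ) (Ω : Set (X × ℝ)) (hΩ : Ω ∈ 𝓝 ((0 : X), lam0))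
    (K : X →L[ℝ] X) (hK : IsCompactOperator K)
    (H : X × ℝ → X) (hH : IsCompactMapOn H Ω) (hh : ContinuousOn (hmap H) Ω)
    (hΩne : Ω ≠ Set.univ)
    (hCb : Bornology.IsBounded (Ccomp (Fmap K H) Ω lam0))
    (hCd : closure (Ccomp (Fmap K H) Ω lam0) ∩ frontier Ω = ∅)
    (δ : ℝ) (hδ : 0 < δ)
    (hΩδnhds : Omdelta Ω δ ∈ 𝓝 ((0 : X), lam0))
    (hΩδcl : closure (Omdelta Ω δ) ⊆ Ω)
    (hCΩδ : Ccomp (Fmap K H) Ω lam0 ⊆ Omdelta Ω δ)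
    (Htil : X × ℝ → X) (hHtil : IsCompactMapOn Htil Set.univ)
    (hhtil : ContinuousOn (hmap Htil) Set.univ)
    (hagree : ∀ p ∈ closure (Omdelta Ω δ), Fmap K Htil p = Fmap K H p) :
    Ccomp (Fmap K H) Ω lam0 = Ccomp (Fmap K H) (closure (Omdelta Ω δ)) lam0 ∧
      Ccomp (Fmap K H) Ω lam0 = Ccomp (Fmap K Htil) Set.univ lam0 := by
    classical
  set p₀ : X × ℝ := ((0 : X), lam0) with hp₀def
  have hp₀Ω : p₀ ∈ Ω := mem_of_mem_nhds hΩ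
  set T : Set (X × ℝ) := {p | p ∈ Ω ∧ Fmap K H p = 0 ∧ p.1 ≠ 0} with hTdef
  set A : Set (X × ℝ) := SolClosure (Fmap K H) Ω ∪ {p₀} with hAdef
  have hSol : SolClosure (Fmap K H) Ω = closure T ∩ Ω := rfl
  have hp₀A : p₀ ∈ A := Or.inr rfl
  set C : Set (X × ℝ) := Ccomp (Fmap K H) Ω lam0 with hCdef
  have hCamb : C = connectedComponentIn A p₀ := rfl
  have hCsub : C ⊆ A := by rw [hCamb]; exact connectedComponentIn_subset _ _
  have hCconn : IsPreconnected C := by rw [hCamb]; exact isPreconnected_connectedComponentIn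
  have hp₀C : p₀ ∈ C := by rw [hCamb]; exact mem_connectedComponentIn hp₀A
  have hopen : IsOpen (Omdelta Ω δ) := isOpen_Omdelta hδ
  have hCΩ : C ⊆ Ω := by
    intro p hp
    rcases hCsub hp with h | h
    · exact h.2
    · rw [mem_singleton_iff] at h; exact h ▸ hp₀Ω
  -- localize closures inside open sets
  have hloc : ∀ (S U : Set (X × ℝ)), IsOpen U → ∀ p ∈ closure S, p ∈ U →
      p ∈ closure (S ∩ U) := by
    intro S U hU p hp hpU
    rw [mem_closure_iff_nhds] at hp ⊢
    intro V hV
    obtain ⟨q, hq⟩ := hp (V ∩ U) (Filter.inter_mem hV (hU.mem_nhds hpU))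
    exact ⟨q, hq.1.1, hq.2, hq.1.2⟩
  -- solution set comparisons
  set T' : Set (X × ℝ) :=
    {p | p ∈ closure (Omdelta Ω δ) ∧ Fmap K H p = 0 ∧ p.1 ≠ 0} with hT'def
  set T2 : Set (X × ℝ) := {p | p ∈ (univ : Set (X × ℝ)) ∧ Fmap K Htil p = 0 ∧ p.1 ≠ 0}
    with hT2def
  have hTT' : T ∩ Omdelta Ω δ ⊆ T' := by
    rintro q ⟨hq, hqδ⟩
    exact ⟨subset_closure hqδ, hq.2⟩
  have hT'T : T' ⊆ T := by
    rintro q hq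
    exact ⟨hΩδcl hq.1, hq.2⟩
  have hTT2 : T ∩ Omdelta Ω δ ⊆ T2 := by
    rintro q ⟨hq, hqδ⟩
    exact ⟨trivial, by rw [hagree q (subset_closure hqδ)]; exact hq.2.1, hq.2.2⟩
  have hT2T : T2 ∩ Omdelta Ω δ ⊆ T := by
    rintro q ⟨hq, hqδ⟩
    exact ⟨hqδ.1, by rw [← hagree q (subset_closure hqδ)]; exact hq.2.1, hq.2.2⟩
  have hCsolδ : ∀ p ∈ C, p ≠ p₀ → p ∈ closure (T ∩ Omdelta Ω δ) := by
    intro p hp hne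
    have hpS : p ∈ closure T ∩ Ω := by
      rcases hCsub hp with h | h
      · exact h
      · rw [mem_singleton_iff] at h; exact absurd h hne
    exact hloc T _ hopen p hpS.1 (hCΩδ hp)
  constructor
  · -- first equality
    apply Subset.antisymm
    · refine hCconn.subset_connectedComponentIn hp₀C ?_
      intro p hp
      by_cases hne : p = p₀
      · exact Or.inr (mem_singleton_iff.mpr hne)
      · refine Or.inl ⟨closure_mono hTT' (hCsolδ p hp hne), subset_closure (hCΩδ hp)⟩
    · rw [hCamb]
      refine connectedComponentIn_mono p₀ ?_
      refine union_subset_union_left _ ?_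
      rintro p ⟨hp1, hp2⟩
      exact ⟨closure_mono hT'T hp1, hΩδcl hp2⟩
  · -- second equality
    -- C is closed
    have hclΩ : closure C ⊆ Ω := by
      intro p hp
      have h1 : p ∈ closure Ω := closure_mono hCΩ hp
      have h2 : p ∉ frontier Ω := fun hfr =>
        (eq_empty_iff_forall_notMem.mp hCd p) ⟨hp, hfr⟩
      by_contra hni
      exact h2 ⟨h1, fun hint => hni (interior_subset hint)⟩
    have hAclΩ : closure A ∩ Ω ⊆ A := by
      rintro p ⟨hp1, hp2⟩
      have : closure A ⊆ closure T ∪ {p₀} := by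
        rw [hAdef, hSol]
        calc closure (closure T ∩ Ω ∪ {p₀})
            ⊆ closure (closure T) ∪ closure {p₀} := by
              rw [closure_union]
              exact union_subset_union (closure_mono inter_subset_left) subset_rfl
          _ = closure T ∪ {p₀} := by rw [closure_closure, closure_singleton]
      rcases this hp1 with h | h
      · exact Or.inl ⟨h, hp2⟩
      · exact Or.inr h
    have hCclosed : IsClosed C := by
      have himg : C = Subtype.val '' connectedComponent (⟨p₀, hp₀A⟩ : A) := by
        rw [hCamb]; exact connectedComponentIn_eq_image hp₀A
      obtain ⟨D, hD, hDeq⟩ := isClosed_induced_iff.mp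
        (isClosed_connectedComponent (x := (⟨p₀, hp₀A⟩ : A)))
      have hCD : C = A ∩ D := by
        rw [himg, ← hDeq, Subtype.image_preimage_coe]
      apply isClosed_of_closure_subset
      intro p hp
      have hpD : p ∈ D := by
        have : closure C ⊆ D := closure_minimal (by rw [hCD]; exact inter_subset_right) hD
        exact this hp
      have hpA : p ∈ A := hAclΩ ⟨closure_mono hCsub hp, hclΩ hp⟩
      rw [hCD]; exact ⟨hpA, hpD⟩
    -- C is compact
    have hFcont : ContinuousOn (Fmap K H) Ω := by
      have h1 : Continuous fun p : X × ℝ => p.1 - p.2 • K p.1 :=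
        continuous_fst.sub (continuous_snd.smul (K.continuous.comp continuous_fst))
      exact h1.continuousOn.sub hH.1
    have hCzero : ∀ p ∈ C, p ≠ p₀ → Fmap K H p = 0 := by
      intro p hp hne
      have hpS : p ∈ closure T ∩ Ω := by
        rcases hCsub hp with h | h
        · exact h
        · rw [mem_singleton_iff] at h; exact absurd h hne
      exact zeros_of_closure hFcont (fun q hq => ⟨hq.1, hq.2.1⟩) hpS.1 hpS.2
    have hCcomp : IsCompact C := isCompact_of_sol K hK hH hCclosed hCb hCΩ p₀ hCzero
    -- thickening
    obtain ⟨ρ, hρ, hρsub⟩ := hCcomp.exists_cthickening_subset_open hopen hCΩδ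
    set N : Set (X × ℝ) := Metric.cthickening ρ C with hNdef
    have hNclosed : IsClosed N := Metric.isClosed_cthickening
    have hNbdd : Bornology.IsBounded N := hCb.cthickening
    have hCintN : C ⊆ interior N :=
      (Metric.self_subset_thickening hρ C).trans
        (interior_maximal (Metric.thickening_subset_cthickening ρ C)
          Metric.isOpen_thickening)
    have hCfrN : ∀ p ∈ C, p ∉ frontier N := fun p hp hfr => hfr.2 (hCintN hp)
    -- the global solution set
    set A2 : Set (X × ℝ) := SolClosure (Fmap K Htil) univ ∪ {p₀} with hA2def
    have hSol2 : SolClosure (Fmap K Htil) univ = closure T2 ∩ univ := rfl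
    have hp₀A2 : p₀ ∈ A2 := Or.inr rfl
    have hA2sub : A2 ⊆ closure T2 ∪ {p₀} := by
      rw [hA2def, hSol2]
      exact union_subset_union_left _ inter_subset_left
    have hFtcont : Continuous (Fmap K Htil) := by
      have h1 : Continuous fun p : X × ℝ => p.1 - p.2 • K p.1 :=
        continuous_fst.sub (continuous_snd.smul (K.continuous.comp continuous_fst))
      have h2 : Continuous Htil := continuousOn_univ.mp hHtil.1
      exact h1.sub h2
    have hT2zero : ∀ p ∈ closure T2, Fmap K Htil p = 0 := fun p hp =>
      zeros_of_closure hFtcont.continuousOn (fun q hq => ⟨trivial, hq.2.1⟩) hp trivial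
    set S2 : Set (X × ℝ) := A2 ∩ N with hS2def
    have hS2closed : IsClosed S2 := by
      refine IsClosed.inter ?_ hNclosed
      rw [hA2def, hSol2]
      exact (isClosed_closure.inter isClosed_univ).union isClosed_singleton
    have hS2bdd : Bornology.IsBounded S2 := hNbdd.subset inter_subset_right
    have hS2zero : ∀ p ∈ S2, p ≠ p₀ → Fmap K Htil p = 0 := by
      intro p hp hne
      rcases hA2sub hp.1 with h | h
      · exact hT2zero p h
      · rw [mem_singleton_iff] at h; exact absurd h hne
    have hS2comp : IsCompact S2 :=
      isCompact_of_sol K hK hHtil hS2closed hS2bdd (subset_univ _) p₀ hS2zero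
    have hp₀S2 : p₀ ∈ S2 := ⟨hp₀A2, interior_subset (hCintN hp₀C)⟩
    -- points of the global closure inside Ωδ are local solutions
    have hkey : ∀ p, p ∈ closure T2 → p ∈ Omdelta Ω δ → p ∈ closure T ∩ Ω := by
      intro p h1 h2
      exact ⟨closure_mono hT2T (hloc T2 _ hopen p h1 h2), h2.1⟩
    -- the component of p₀ in S2 is contained in C
    have hD : connectedComponentIn S2 p₀ ⊆ C := by
      rw [hCamb]
      refine IsPreconnected.subset_connectedComponentIn
        isPreconnected_connectedComponentIn (mem_connectedComponentIn hp₀S2) ?_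
      intro p hp
      by_cases hne : p = p₀
      · exact hne ▸ hp₀A
      · have hpS2 : p ∈ S2 := connectedComponentIn_subset _ _ hp
        have hpδ : p ∈ Omdelta Ω δ := hρsub hpS2.2
        rcases hA2sub hpS2.1 with h | h
        · exact Or.inl (hkey p h hpδ)
        · rw [mem_singleton_iff] at h; exact absurd h hne
    -- Šura-Bura separation in the compact set S2
    haveI : CompactSpace S2 := isCompact_iff_compactSpace.mp hS2comp
    set x₀ : S2 := ⟨p₀, hp₀S2⟩ with hx₀def
    have hcomp_eq : connectedComponent x₀ =
        ⋂ s : { s : Set S2 // IsClopen s ∧ x₀ ∈ s }, (s : Set S2) :=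
      connectedComponent_eq_iInter_isClopen x₀
    set B1 : Set S2 := Subtype.val ⁻¹' (frontier N) with hB1def
    have hB1closed : IsClosed B1 := isClosed_frontier.preimage continuous_subtype_val
    have hB1comp : IsCompact B1 := hB1closed.isCompact
    have hempty : B1 ∩ ⋂ s : { s : Set S2 // IsClopen s ∧ x₀ ∈ s }, (s : Set S2) = ∅ := by
      rw [← hcomp_eq, eq_empty_iff_forall_notMem]
      rintro z ⟨hz1, hz2⟩
      have hzin : (z : X × ℝ) ∈ connectedComponentIn S2 p₀ := by
        rw [connectedComponentIn_eq_image hp₀S2]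
        exact ⟨z, hz2, rfl⟩
      exact hCfrN _ (hD hzin) hz1
    haveI : Nonempty { s : Set S2 // IsClopen s ∧ x₀ ∈ s } :=
      ⟨⟨univ, isClopen_univ, mem_univ _⟩⟩
    obtain ⟨⟨Z, hZclopen, hZx₀⟩, hZB1⟩ :=
      hB1comp.elim_directed_family_closed
        (fun s : { s : Set S2 // IsClopen s ∧ x₀ ∈ s } => (s : Set S2))
        (fun s => s.2.1.1) hempty
        (fun i j => ⟨⟨i.1 ∩ j.1, i.2.1.inter j.2.1, ⟨i.2.2, j.2.2⟩⟩,
          inter_subset_left, inter_subset_right⟩)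
    set V : Set (X × ℝ) := Subtype.val '' Z with hVdef
    have hVcomp : IsCompact V := hZclopen.1.isCompact.image continuous_subtype_val
    have hVclosed : IsClosed V := hVcomp.isClosed
    have hVS2 : V ⊆ S2 := by rintro _ ⟨z, _, rfl⟩; exact z.2
    obtain ⟨U, hUopen, hUpre⟩ := isOpen_induced_iff.mp hZclopen.2
    have hVU : V = S2 ∩ U := by rw [hVdef, ← hUpre, Subtype.image_preimage_coe]
    have hVfr : ∀ p ∈ V, p ∉ frontier N := by
      rintro _ ⟨z, hz, rfl⟩ hf
      exact (eq_empty_iff_forall_notMem.mp hZB1 z) ⟨hf, hz⟩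
    have hVint : V ⊆ interior N := by
      intro p hp
      have hpN : p ∈ N := (hVS2 hp).2
      by_contra hni
      exact hVfr p hp ⟨subset_closure hpN, hni⟩
    have hp₀V : p₀ ∈ V := ⟨x₀, hZx₀, rfl⟩
    have hVeq : V = (U ∩ interior N) ∩ A2 := by
      apply Subset.antisymm
      · intro p hp
        exact ⟨⟨(hVU ▸ hp).2, hVint hp⟩, (hVS2 hp).1⟩
      · rintro p ⟨⟨hpU, hpN⟩, hpA2⟩
        rw [hVU]; exact ⟨⟨hpA2, interior_subset hpN⟩, hpU⟩
    -- V yields a clopen subset of A2 containing p₀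
    set y₀ : A2 := ⟨p₀, hp₀A2⟩ with hy₀def
    set Z2 : Set A2 := Subtype.val ⁻¹' V with hZ2def
    have hZ2clopen : IsClopen Z2 := by
      constructor
      · exact hVclosed.preimage continuous_subtype_val
      · have hpre : Z2 = Subtype.val ⁻¹' (U ∩ interior N) := by
          ext z
          simp only [hZ2def, mem_preimage, hVeq, mem_inter_iff]
          exact ⟨fun h => h.1, fun h => ⟨h, z.2⟩⟩
        rw [hpre]
        exact (hUopen.inter isOpen_interior).preimage continuous_subtype_val
    have hy₀Z2 : y₀ ∈ Z2 := hp₀V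
    have hC2amb : Ccomp (Fmap K Htil) univ lam0 = connectedComponentIn A2 p₀ := rfl
    have hC2V : Ccomp (Fmap K Htil) univ lam0 ⊆ V := by
      rw [hC2amb, connectedComponentIn_eq_image hp₀A2]
      have hsub : connectedComponent y₀ ⊆ Z2 :=
        hZ2clopen.connectedComponent_subset hy₀Z2
      rintro _ ⟨z, hz, rfl⟩
      exact hsub hz
    -- conclude
    apply Subset.antisymm
    · rw [hC2amb]
      refine hCconn.subset_connectedComponentIn hp₀C ?_
      intro p hp
      by_cases hne : p = p₀
      · exact Or.inr (mem_singleton_iff.mpr hne)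
      · exact Or.inl ⟨closure_mono hTT2 (hCsolδ p hp hne), trivial⟩
    · rw [hCamb, hC2amb]
      refine IsPreconnected.subset_connectedComponentIn
        isPreconnected_connectedComponentIn
        (by rw [← hC2amb]; exact mem_connectedComponentIn hp₀A2) ?_
      rw [← hC2amb]
      intro p hp
      by_cases hne : p = p₀
      · exact hne ▸ hp₀A
      · have hpV : p ∈ V := hC2V hp
        have hpδ : p ∈ Omdelta Ω δ := hρsub (hVS2 hpV).2
        have hpA2 : p ∈ A2 := by rw [hC2amb] at hp; exact connectedComponentIn_subset _ _ hp
        rcases hA2sub hpA2 with h | h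
        · exact Or.inl (hkey p h hpδ)
        · rw [mem_singleton_iff] at h; exact absurd h hne
end

section
/- For each κ ∈ {+,−}, the set C_{λ₀}^κ(F) is connected and equals the closure in Ω of ⋃_{0<ε<S} C_{λ₀,ε}^κ. -/
open Set Topology

variable {X : Type*} [NormedAddCommGroup X] [NormedSpace ℝ X]

/-!
A branch in the direction of `σ v` avoids the opposite cone `𝔠_y^{-σ}` near `(0, λ₀)`, so it
lies in some `C_{λ₀,ε}^σ`. Conversely, a nontrivial `C_{λ₀,ε}^σ` is itself a branch: being
connected and containing `(0, λ₀)`, it meets every small sphere `∂𝔛_{λ₀}(δ)`; there it lies in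
`𝔠_y^σ`, and solutions of `F = 0` close to `(0, λ₀)` in `𝔠_y^σ` lie in every narrower cone
`𝔠_{y'}^σ` by compactness of `K` and simplicity of `λ₀`. Hence `⋃_ε C_{λ₀,ε}^σ` is exactly
`{(0, λ₀)}` together with all branches, which is connected.
-/

open Filter

section Chart

/-- Centres `(0, λ₀)` at the origin of the `ℓ¹` product, whose balls are the sets `𝔛_{λ₀}(r)`. -/
noncomputable def l1Chart (E : Type*) [NormedAddCommGroup E] (lam0 : ℝ) :
    E × ℝ ≃ₜ WithLp 1 (E × ℝ) :=
  ((Homeomorph.refl E).prodCongr (Homeomorph.subRight lam0)).trans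
    (WithLp.homeomorphProd 1 E ℝ).symm

variable {E : Type*} [NormedAddCommGroup E] {lam0 r : ℝ}

lemma norm_l1Chart (p : E × ℝ) : ‖l1Chart E lam0 p‖ = ‖p.1‖ + |lam0 - p.2| := by
  rw [WithLp.prod_norm_eq_of_L1, Real.norm_eq_abs, abs_sub_comm]
  rfl

lemma l1Chart_base : l1Chart E lam0 ((0 : E), lam0) = 0 :=
  norm_eq_zero.mp (by simp [norm_l1Chart])

lemma l1Chart_eq_zero_iff {p : E × ℝ} : l1Chart E lam0 p = 0 ↔ p = ((0 : E), lam0) := by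
  rw [← l1Chart_base, (l1Chart E lam0).injective.eq_iff]

lemma ball0_eq_preimage : ball0 E lam0 r = l1Chart E lam0 ⁻¹' Metric.ball 0 r := by
  ext p
  simp [ball0, norm_l1Chart]

lemma mem_ball0 {p : E × ℝ} : p ∈ ball0 E lam0 r ↔ ‖l1Chart E lam0 p‖ < r := by
  rw [norm_l1Chart]
  rfl

lemma frontier_ball0_s14 [NormedSpace ℝ E] (hr : r ≠ 0) :
    frontier (ball0 E lam0 r) = {p | ‖l1Chart E lam0 p‖ = r} := by
  rw [ball0_eq_preimage, ← Homeomorph.preimage_frontier, frontier_ball 0 hr]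
  ext p
  simp

lemma nhds_basis_ball0 : (𝓝 ((0 : E), lam0)).HasBasis (0 < ·) (ball0 E lam0) := by
  rw [(l1Chart E lam0).nhds_eq_comap, l1Chart_base]
  convert Metric.nhds_basis_ball.comap (l1Chart E lam0) using 1
  exact funext fun _ => ball0_eq_preimage

lemma norm_l1Chart_pos {p : E × ℝ} (hp : p ≠ ((0 : E), lam0)) : 0 < ‖l1Chart E lam0 p‖ :=
  norm_pos_iff.mpr (l1Chart_eq_zero_iff.not.mpr hp)

lemma mem_frontier_ball0_norm_l1Chart [NormedSpace ℝ E] {p : E × ℝ}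
    (hp : p ≠ ((0 : E), lam0)) :
    p ∈ frontier (ball0 E lam0 ‖l1Chart E lam0 p‖) := by
  rw [frontier_ball0_s14 (norm_l1Chart_pos hp).ne']
  rfl

end Chart

section Cone

variable {l : X →L[ℝ] ℝ} {σ y : ℝ} {p : X × ℝ}

lemma fst_ne_zero_of_mem_cone (hp : p ∈ cone l σ y) : p.1 ≠ 0 := by
  rintro h
  simp [cone, h] at hp

lemma not_mem_cone_neg (hy : 0 ≤ y) (hp : p ∈ cone l σ y) : p ∉ cone l (-σ) y := by
  intro hp'
  simp only [cone, mem_ofPred_eq, neg_mul] at hp hp'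
  nlinarith [norm_nonneg p.1]

lemma mem_cone_or_mem_cone_neg (hσ : σ = 1 ∨ σ = -1) (hp : p ∈ coneAbs l y) :
    p ∈ cone l σ y ∨ p ∈ cone l (-σ) y := by
  simp only [coneAbs, cone, mem_ofPred_eq] at hp ⊢
  rcases hσ with rfl | rfl <;> cases abs_cases (l p.1) <;> [left; right; right; left] <;> linarith

lemma mem_cone_iff_lt_normalize (hx : p.1 ≠ 0) :
    p ∈ cone l σ y ↔ y < σ * l (‖p.1‖⁻¹ • p.1) := by
  rw [map_smul, smul_eq_mul, mul_left_comm, lt_inv_mul_iff₀ (norm_pos_iff.mpr hx), mul_comm]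
  rfl

end Cone

section Solutions

variable {K : X →L[ℝ] X} {H : X × ℝ → X} {Ω : Set (X × ℝ)} {p : X × ℝ}

lemma continuousOn_fmap (hH : ContinuousOn H Ω) : ContinuousOn (Fmap K H) Ω :=
  (by fun_prop : Continuous fun p : X × ℝ => p.1 - p.2 • K p.1).continuousOn.sub hH

lemma eq_zero_of_mem_solClosure {E : Type*} [NormedAddCommGroup E] {F : E × ℝ → E}
    {U : Set (E × ℝ)} (hF : ContinuousOn F U) {q : E × ℝ} (hq : q ∈ SolClosure F U) :
    F q = 0 := by
  have := (hF q hq.2).mono (fun r hr => hr.1) |>.mem_closure_image hq.1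
  have himg : F '' {r | r ∈ U ∧ F r = 0 ∧ r.1 ≠ 0} ⊆ {0} := by
    rintro _ ⟨r, hr, rfl⟩
    exact hr.2.1
  simpa using closure_mono himg this

lemma normalize_eq_of_fmap_eq_zero (hp : Fmap K H p = 0) (hx : p.1 ≠ 0) :
    ‖p.1‖⁻¹ • p.1 = p.2 • K (‖p.1‖⁻¹ • p.1) + hmap H p := by
  rw [hmap, if_neg hx, map_smul, smul_comm, ← smul_add]
  rw [Fmap, sub_sub, sub_eq_zero] at hp
  rw [← hp]

end Solutions

lemma Module.End.exists_smul_eq_of_finrank_maxGenEigenspace_eq_one {𝕜 M : Type*} [Field 𝕜]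
    [AddCommGroup M] [Module 𝕜 M] {f : Module.End 𝕜 M} {μ : 𝕜}
    (h : Module.finrank 𝕜 (f.maxGenEigenspace μ) = 1) {v u : M} (hv0 : v ≠ 0)
    (hv : f v = μ • v) (hu : f u = μ • u) : ∃ c : 𝕜, c • v = u := by
  have mem : ∀ w, f w = μ • w → w ∈ f.maxGenEigenspace μ := fun w hw =>
    Module.End.eigenspace_le_maxGenEigenspace (Module.End.mem_eigenspace_iff.mpr hw)
  obtain ⟨c, hc⟩ := (finrank_eq_one_iff_of_nonzero' ⟨v, mem v hv⟩
    (by simpa using hv0)).mp h ⟨u, mem u hu⟩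
  exact ⟨c, congrArg Subtype.val hc⟩

section Analytic

variable {K : X →L[ℝ] X} {H : X × ℝ → X} {Ω : Set (X × ℝ)} {lam0 : ℝ} {v : X}
  {l : X →L[ℝ] ℝ} {σ y y' : ℝ}

lemma abs_apply_eq_one_of_eigenvector (hsimple : charMult K lam0 = 1) (hv : ‖v‖ = 1)
    (hKv : K v = lam0⁻¹ • v) (hlv : l v = 1) {u : X} (hu : ‖u‖ = 1)
    (hKu : K u = lam0⁻¹ • u) : |l u| = 1 := by
  obtain ⟨c, rfl⟩ := Module.End.exists_smul_eq_of_finrank_maxGenEigenspace_eq_one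
    (f := (K : X →ₗ[ℝ] X)) hsimple (norm_ne_zero_iff.mp (hv ▸ one_ne_zero)) hKv hKu
  rw [norm_smul, hv, mul_one, Real.norm_eq_abs] at hu
  rwa [map_smul, hlv, smul_eq_mul, mul_one]


lemma exists_unit_eigenvector_of_tendsto (hK : IsCompactOperator K)
    (hh : ContinuousWithinAt (hmap H) Ω ((0 : X), lam0)) {p : ℕ → X × ℝ}
    (hpΩ : ∀ n, p n ∈ Ω) (hsol : ∀ n, Fmap K H (p n) = 0) (hx : ∀ n, (p n).1 ≠ 0)
    (hlim : Tendsto p atTop (𝓝 ((0 : X), lam0))) :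
    ∃ u : X, ‖u‖ = 1 ∧ K u = lam0⁻¹ • u ∧ ∃ φ : ℕ → ℕ, StrictMono φ ∧
      Tendsto (fun n => ‖(p (φ n)).1‖⁻¹ • (p (φ n)).1) atTop (𝓝 u) := by
  set u : ℕ → X := fun n => ‖(p n).1‖⁻¹ • (p n).1
  have hun : ∀ n, ‖u n‖ = 1 := fun n => norm_smul_inv_norm (hx n)
  obtain ⟨C, hC, hKC⟩ := hK.image_closedBall_subset_compact 1
  obtain ⟨w, -, φ, hφ, hKw⟩ := hC.tendsto_subseq (x := fun n => K (u n))
    fun n => hKC ⟨u n, by simp [hun n], rfl⟩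
  have hh0 : Tendsto (hmap H ∘ p) atTop (𝓝 0) := by
    have h0 : hmap H ((0 : X), lam0) = 0 := if_pos rfl
    exact h0 ▸ hh.tendsto.comp (tendsto_nhdsWithin_iff.mpr ⟨hlim, Eventually.of_forall hpΩ⟩)
  have hu : Tendsto (u ∘ φ) atTop (𝓝 (lam0 • w)) := by
    have hlam := (continuous_snd.tendsto _).comp (hlim.comp hφ.tendsto_atTop)
    have := (hlam.smul hKw).add (hh0.comp hφ.tendsto_atTop)
    rw [add_zero] at this
    refine this.congr fun n => ?_
    exact (normalize_eq_of_fmap_eq_zero (hsol (φ n)) (hx (φ n))).symm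
  have hnorm : ‖lam0 • w‖ = 1 := tendsto_nhds_unique hu.norm (by simp [hun])
  have hlam0 : lam0 ≠ 0 := by rintro rfl; simp at hnorm
  have hKu : K (lam0 • w) = w := tendsto_nhds_unique ((K.continuous.tendsto _).comp hu) hKw
  refine ⟨lam0 • w, hnorm, ?_, φ, hφ, hu⟩
  rw [hKu, smul_smul, inv_mul_cancel₀ hlam0, one_smul]


/-- Near `(0, λ₀)` the solutions in a cone around `σ v` lie in every narrower cone: otherwise
normalized solutions would accumulate at a unit eigenvector `u` with `y ≤ σ l(u) ≤ y' < 1`,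
while simplicity forces `u = ±v`. -/
theorem eventually_mem_cone_of_mem_cone (hK : IsCompactOperator K) (hH : ContinuousOn H Ω)
    (hh : ContinuousWithinAt (hmap H) Ω ((0 : X), lam0)) (hsimple : charMult K lam0 = 1)
    (hv : ‖v‖ = 1) (hKv : K v = lam0⁻¹ • v) (hlv : l v = 1) (hy : 0 < y)
    (hσ : σ = 1 ∨ σ = -1) (hy' : y' < 1) :
    ∀ᶠ p in 𝓝 ((0 : X), lam0),
      p ∈ SolClosure (Fmap K H) Ω → p ∈ cone l σ y → p ∈ cone l σ y' := by
  by_contra hcon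
  obtain ⟨p, hlim, hp⟩ := frequently_iff_seq_forall.mp (not_eventually.mp hcon)
  simp only [Classical.not_imp] at hp
  have hx n : (p n).1 ≠ 0 := fst_ne_zero_of_mem_cone (hp n).2.1
  obtain ⟨u, hu, hKu, φ, -, hφu⟩ := exists_unit_eigenvector_of_tendsto hK hh
    (fun n => (hp n).1.2) (fun n => eq_zero_of_mem_solClosure (continuousOn_fmap hH) (hp n).1)
    hx hlim
  have hbounds : σ * l u ∈ Icc y y' := by
    refine (isClosed_Icc.preimage (f := fun w => σ * l w) (by fun_prop)).mem_of_tendsto hφu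
      (Eventually.of_forall fun n => ?_)
    have hcone t := mem_cone_iff_lt_normalize (l := l) (σ := σ) (y := t) (hx (φ n))
    exact ⟨((hcone y).mp (hp (φ n)).2.1).le, not_lt.mp fun h => (hp (φ n)).2.2 ((hcone y').mpr h)⟩
  have habs : |σ * l u| = 1 := by
    rw [abs_mul, abs_apply_eq_one_of_eigenvector hsimple hv hKv hlv hu hKu]
    rcases hσ with rfl | rfl <;> simp
  rw [abs_of_pos (hy.trans_le hbounds.1)] at habs
  linarith [hbounds.2]

end Analytic

section Branches

variable {F : X × ℝ → X} {Ω : Set (X × ℝ)} {lam0 : ℝ} {l : X →L[ℝ] ℝ} {σ y ε S : ℝ}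

lemma base_mem_Cloc : ((0 : X), lam0) ∈ Cloc F Ω lam0 l y σ ε :=
  mem_connectedComponentIn
    ⟨mem_connectedComponentIn (Or.inr rfl), fun h => fst_ne_zero_of_mem_cone h.2 rfl⟩

lemma IsBranch.eventually_subset_Cloc {Q : Set (X × ℝ)} (hy : y ∈ Ioo 0 1)
    (hQ : IsBranch F Ω lam0 l σ Q) : ∀ᶠ ε in 𝓝[>] 0, Q ⊆ Cloc F Ω lam0 l y σ ε := by
  obtain ⟨hQC, hQconn, hQ0, hQcone⟩ := hQ
  obtain ⟨ε₀, hε₀, hε₀cone⟩ := hQcone y hy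
  filter_upwards [Ioo_mem_nhdsGT hε₀] with ε hε
  refine hQconn.subset_connectedComponentIn hQ0 fun q hq => ⟨hQC hq, ?_⟩
  rintro ⟨hqε, hqcone⟩
  obtain rfl | hq0 := eq_or_ne q ((0 : X), lam0)
  · exact fst_ne_zero_of_mem_cone hqcone rfl
  have hr : 0 < ‖l1Chart X lam0 q‖ := norm_l1Chart_pos hq0
  have hrε₀ : ‖l1Chart X lam0 q‖ < ε₀ := (mem_ball0.mp hqε).trans hε.2
  exact not_mem_cone_neg hy.1.le
    ((hε₀cone _ hr hrε₀).2 ⟨hq, mem_frontier_ball0_norm_l1Chart hq0⟩) hqcone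

lemma Cloc_inter_frontier_nonempty {q : X × ℝ} (hq : q ∈ Cloc F Ω lam0 l y σ ε) {δ : ℝ}
    (hδ : 0 < δ) (hδq : δ ≤ ‖l1Chart X lam0 q‖) :
    (Cloc F Ω lam0 l y σ ε ∩ frontier (ball0 X lam0 δ)).Nonempty := by
  obtain ⟨r, hr, hrδ⟩ := isPreconnected_connectedComponentIn.intermediate_value base_mem_Cloc hq
    (continuous_norm.comp (l1Chart X lam0).continuous).continuousOn
    ⟨by simp [l1Chart_base, hδ.le], hδq⟩
  exact ⟨r, hr, by rw [frontier_ball0_s14 hδ.ne']; exact hrδ⟩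

lemma Cloc_inter_frontier_subset {δ : ℝ} (hσ : σ = 1 ∨ σ = -1)
    (hScone : (SolClosure F Ω ∩ closure (ball0 X lam0 S)) \ {((0 : X), lam0)} ⊆ coneAbs l y)
    (hδ : 0 < δ) (hδε : δ < ε) (hδS : δ < S) :
    Cloc F Ω lam0 l y σ ε ∩ frontier (ball0 X lam0 δ) ⊆ SolClosure F Ω ∩ cone l σ y := by
  rintro r ⟨hrC, hrδ⟩
  rw [frontier_ball0_s14 hδ.ne', mem_ofPred_eq] at hrδ
  have hr0 : r ≠ ((0 : X), lam0) := by
    rintro rfl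
    simp [l1Chart_base, hδ.ne] at hrδ
  obtain ⟨hrCcomp, hrε⟩ := connectedComponentIn_subset _ _ hrC
  have hrS : r ∈ SolClosure F Ω := (connectedComponentIn_subset _ _ hrCcomp).resolve_right hr0
  have hrcone := mem_cone_or_mem_cone_neg hσ
    (hScone ⟨⟨hrS, subset_closure (mem_ball0.mpr (hrδ ▸ hδS))⟩, hr0⟩)
  exact ⟨hrS, hrcone.resolve_right fun h => hrε ⟨mem_ball0.mpr (hrδ ▸ hδε), h⟩⟩


lemma isBranch_Cloc (hσ : σ = 1 ∨ σ = -1)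
    (hScone : (SolClosure F Ω ∩ closure (ball0 X lam0 S)) \ {((0 : X), lam0)} ⊆ coneAbs l y)
    (hkey : ∀ y' < 1, ∀ᶠ p in 𝓝 ((0 : X), lam0),
      p ∈ SolClosure F Ω → p ∈ cone l σ y → p ∈ cone l σ y')
    (hε : ε ∈ Ioo 0 S) {q : X × ℝ} (hq : q ∈ Cloc F Ω lam0 l y σ ε)
    (hq0 : q ≠ ((0 : X), lam0)) :
    IsBranch F Ω lam0 l σ (Cloc F Ω lam0 l y σ ε) := by
  refine ⟨(connectedComponentIn_subset _ _).trans sdiff_subset,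
    isPreconnected_connectedComponentIn, base_mem_Cloc, fun y' hy' => ?_⟩
  obtain ⟨ε', hε', hε'cone⟩ := nhds_basis_ball0.eventually_iff.mp (hkey y' hy'.2)
  have hqpos : 0 < ‖l1Chart X lam0 q‖ := norm_l1Chart_pos hq0
  refine ⟨min (min ε' ε) ‖l1Chart X lam0 q‖, lt_min (lt_min hε' hε.1) hqpos, fun δ hδ hδlt => ?_⟩
  simp only [lt_min_iff] at hδlt
  refine ⟨Cloc_inter_frontier_nonempty hq hδ hδlt.2.le, fun r hr => ?_⟩
  obtain ⟨hrS, hrcone⟩ :=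
    Cloc_inter_frontier_subset hσ hScone hδ hδlt.1.2 (hδlt.1.2.trans hε.2) hr
  have hrδ : ‖l1Chart X lam0 r‖ = δ := (frontier_ball0_s14 hδ.ne').subset hr.2
  exact hε'cone (mem_ball0.mpr (hrδ ▸ hδlt.1.1)) hrS hrcone

lemma iUnion_Cloc_eq (hy : y ∈ Ioo 0 1) (hσ : σ = 1 ∨ σ = -1) (hS0 : 0 < S)
    (hScone : (SolClosure F Ω ∩ closure (ball0 X lam0 S)) \ {((0 : X), lam0)} ⊆ coneAbs l y)
    (hkey : ∀ y' < 1, ∀ᶠ p in 𝓝 ((0 : X), lam0),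
      p ∈ SolClosure F Ω → p ∈ cone l σ y → p ∈ cone l σ y') :
    ⋃ ε ∈ Ioo 0 S, Cloc F Ω lam0 l y σ ε =
      {((0 : X), lam0)} ∪ ⋃₀ {Q | IsBranch F Ω lam0 l σ Q} := by
  apply Subset.antisymm
  · refine iUnion₂_subset fun ε hε q hq => ?_
    obtain rfl | hq0 := eq_or_ne q ((0 : X), lam0)
    · exact Or.inl rfl
    · exact Or.inr ⟨_, isBranch_Cloc hσ hScone hkey hε hq hq0, hq⟩
  · rintro q (rfl | ⟨Q, hQ, hq⟩)
    · exact mem_biUnion ⟨half_pos hS0, half_lt_self hS0⟩ base_mem_Cloc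
    · obtain ⟨ε, hQε, hε⟩ := ((hQ.eventually_subset_Cloc hy).and (Ioo_mem_nhdsGT hS0)).exists
      exact mem_biUnion hε (hQε hq)

lemma isConnected_Cdir (hΩ : ((0 : X), lam0) ∈ Ω) : IsConnected (Cdir F Ω lam0 l σ) := by
  have hA : IsPreconnected ({((0 : X), lam0)} ∪ ⋃₀ {Q | IsBranch F Ω lam0 l σ Q}) := by
    rw [← sUnion_insert]
    refine isPreconnected_sUnion ((0 : X), lam0) _ (fun Q hQ => ?_) (fun Q hQ => ?_) <;>
      obtain rfl | hQ := hQ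
    exacts [rfl, hQ.2.2.1, isPreconnected_singleton, hQ.2.1]
  have hAΩ : {((0 : X), lam0)} ∪ ⋃₀ {Q | IsBranch F Ω lam0 l σ Q} ⊆ Ω := by
    rintro p (rfl | ⟨Q, hQ, hp⟩)
    · exact hΩ
    · obtain h | rfl := connectedComponentIn_subset _ _ (hQ.1 hp)
      exacts [h.2, hΩ]
  exact ⟨⟨_, subset_closure (Or.inl rfl), hΩ⟩,
    hA.subset_closure (subset_inter subset_closure hAΩ) inter_subset_left⟩

end Branches

theorem Cdir_connected_eq_closure_union_general
    {X : Type*} [NormedAddCommGroup X] [NormedSpace ℝ X]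
    (lam0 : ℝ) (Ω : Set (X × ℝ)) (hΩ : Ω ∈ 𝓝 ((0 : X), lam0))
    (K : X →L[ℝ] X) (hK : IsCompactOperator K)
    (H : X × ℝ → X) (hH : IsCompactMapOn H Ω) (hh : ContinuousOn (hmap H) Ω)
    (hsimple : charMult K lam0 = 1)
    (v : X) (hv : ‖v‖ = 1) (hKv : K v = lam0⁻¹ • v)
    (l : X →L[ℝ] ℝ) (hlv : l v = 1)
    (y : ℝ) (hy : y ∈ Ioo (0 : ℝ) 1) (S : ℝ) (hS0 : 0 < S)
    (hScone : (SolClosure (Fmap K H) Ω ∩ closure (ball0 X lam0 S)) \ {((0 : X), lam0)}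
      ⊆ coneAbs l y) :
    ∀ σ : ℝ, (σ = 1 ∨ σ = -1) →
      IsConnected (Cdir (Fmap K H) Ω lam0 l σ) ∧
        Cdir (Fmap K H) Ω lam0 l σ =
          closure (⋃ ε ∈ Ioo (0 : ℝ) S, Cloc (Fmap K H) Ω lam0 l y σ ε) ∩ Ω := by
  intro σ hσ
  have hbase : ((0 : X), lam0) ∈ Ω := mem_of_mem_nhds hΩ
  have hkey (y' : ℝ) (hy' : y' < 1) := eventually_mem_cone_of_mem_cone hK hH.1
    (hh _ hbase) hsimple hv hKv hlv hy.1 hσ hy'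
  exact ⟨isConnected_Cdir hbase, by rw [Cdir, iUnion_Cloc_eq hy hσ hS0 hScone hkey]⟩

/-- For each `κ ∈ {+,−}`, the set `C_{λ₀}^κ(F)` is connected and
equals the closure in `Ω` of `⋃_{0<ε<S} C_{λ₀,ε}^κ`. -/
theorem Cdir_connected_eq_closure_union
    {X : Type*} [NormedAddCommGroup X] [NormedSpace ℝ X] [CompleteSpace X]
    (lam0 : ℝ) (Ω : Set (X × ℝ)) (hΩ : Ω ∈ 𝓝 ((0 : X), lam0))
    (K : X →L[ℝ] X) (hK : IsCompactOperator K)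
    (H : X × ℝ → X) (hH : IsCompactMapOn H Ω) (hh : ContinuousOn (hmap H) Ω)
    (hchar : CharVal K lam0) (hsimple : charMult K lam0 = 1)
    (v : X) (hv : ‖v‖ = 1) (hKv : K v = lam0⁻¹ • v)
    (l : X →L[ℝ] ℝ) (hl : ∀ x : X, l (K x) = lam0⁻¹ * l x) (hlv : l v = 1)
    (y : ℝ) (hy : y ∈ Ioo (0 : ℝ) 1) (S : ℝ) (hS0 : 0 < S)
    (hSΩ : closure (ball0 X lam0 S) ⊆ interior Ω)
    (hScone : (SolClosure (Fmap K H) Ω ∩ closure (ball0 X lam0 S)) \ {((0 : X), lam0)}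
      ⊆ coneAbs l y) :
    ∀ σ : ℝ, (σ = 1 ∨ σ = -1) →
      IsConnected (Cdir (Fmap K H) Ω lam0 l σ) ∧
        Cdir (Fmap K H) Ω lam0 l σ =
          closure (⋃ ε ∈ Ioo (0 : ℝ) S, Cloc (Fmap K H) Ω lam0 l y σ ε) ∩ Ω :=
  Cdir_connected_eq_closure_union_general lam0 Ω hΩ K hK H hH hh hsimple v hv hKv l hlv y hy S hS0
    hScone
end

section
/- Fix N > 0 and let Ω = closure(𝔠₀⁺) ∪ (closure(𝔠₀⁻) ∩ 𝔛_{λ₀}(N)) and H ≡ 0 on Ω, so that F(x,λ) = x − λ·Kx on Ω. Then: C_{λ₀}⁻(F) is bounded; the closure of C_{λ₀}⁺(F) in 𝔛 does not intersect ∂Ω; and C_{λ₀}⁺(F) ∩ C_{λ₀}⁻(F) = {(0,λ₀)}. -/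
open Set Topology

variable {X : Type*} [NormedAddCommGroup X] [NormedSpace ℝ X]

section AuxLemmas

lemma riesz_seq_core {X : Type*} [NormedAddCommGroup X] [NormedSpace ℝ X] [CompleteSpace X]
    (K : X →L[ℝ] X) (hK : IsCompactOperator K)
    (R : ℝ) (μ : ℕ → ℝ) (hinj : Function.Injective μ) (hbd : ∀ n, |μ n| ≤ R)
    (hμ : ∀ n, ∃ x : X, x ≠ 0 ∧ x = μ n • K x) : False := by
  classical
  choose x hx0 hxe using hμ
  have hμ0 : ∀ n, μ n ≠ 0 := by
    intro n h
    exact hx0 n (by rw [hxe n, h, zero_smul])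
  have hR : 0 < R := lt_of_lt_of_le (abs_pos.2 (hμ0 0)) (hbd 0)
  have hKx : ∀ n, K (x n) = (μ n)⁻¹ • x n := by
    intro n
    have := hxe n
    have : (μ n)⁻¹ • x n = (μ n)⁻¹ • (μ n • K (x n)) := by rw [← this]
    rw [smul_smul, inv_mul_cancel₀ (hμ0 n), one_smul] at this
    exact this.symm
  set T' : Module.End ℝ X := (K : X →ₗ[ℝ] X) with hT'
  have hinj' : Function.Injective (fun n => (μ n)⁻¹) := by
    intro a b h
    exact hinj (inv_injective h)
  have hli : LinearIndependent ℝ x := by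
    refine T'.eigenvectors_linearIndependent' (fun n => (μ n)⁻¹) hinj' x (fun n => ⟨?_, hx0 n⟩)
    rw [Module.End.mem_eigenspace_iff]
    exact hKx n
  set E : ℕ → Submodule ℝ X := fun n => Submodule.span ℝ (x '' Set.Iic n) with hE
  have hEfin : ∀ n, FiniteDimensional ℝ (E n) := by
    intro n
    exact FiniteDimensional.span_of_finite ℝ ((Set.finite_Iic n).image x)
  have hEmono : ∀ {m n : ℕ}, m ≤ n → E m ≤ E n := by
    intro m n h
    exact Submodule.span_mono (Set.image_mono (Set.Iic_subset_Iic.2 h))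
  have hxnot : ∀ n, x (n + 1) ∉ E n := by
    intro n
    exact hli.notMem_span_image (by simp)
  have hxmem : ∀ n, x n ∈ E n := fun n => Submodule.subset_span ⟨n, by simp, rfl⟩
  have hmap : ∀ n, ∀ w ∈ E (n + 1), K w - (μ (n + 1))⁻¹ • w ∈ E n := by
    intro n w hw
    set c := (μ (n + 1))⁻¹ with hc
    set D : X →ₗ[ℝ] X := T' - c • LinearMap.id with hD
    have : (E (n + 1)).map D ≤ E n := by
      rw [hE, Submodule.map_span, Submodule.span_le]
      rintro y ⟨z, ⟨k, hk, rfl⟩, rfl⟩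
      have hDz : D (x k) = ((μ k)⁻¹ - c) • x k := by
        simp [hD, hT', sub_smul, hKx k]
      rcases Nat.lt_or_ge k (n + 1) with hk' | hk'
      · rw [hDz]
        exact Submodule.smul_mem _ _ (Submodule.subset_span ⟨k, Nat.lt_succ_iff.1 hk', rfl⟩)
      · have : k = n + 1 := le_antisymm hk hk'
        rw [hDz, this, hc, sub_self, zero_smul]
        exact Submodule.zero_mem _
    have := this ⟨w, hw, rfl⟩
    simpa [hD, hT'] using this
  have hriesz : ∀ n : ℕ, ∃ u : X, u ∈ E (n + 1) ∧ ‖u‖ = 1 ∧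
      ∀ z ∈ E n, (1 : ℝ) / 2 ≤ ‖u - z‖ := by
    intro n
    haveI := hEfin (n + 1)
    set F : Submodule ℝ (E (n + 1)) := (E n).comap (E (n + 1)).subtype with hF
    have hclosed : IsClosed (F : Set (E (n + 1))) := Submodule.closed_of_finiteDimensional F
    have hex : ∃ y : E (n + 1), y ∉ F := by
      refine ⟨⟨x (n + 1), hxmem (n + 1)⟩, ?_⟩
      simp only [hF, Submodule.mem_comap, Submodule.coe_subtype]
      exact hxnot n
    obtain ⟨y, hyF, hy⟩ := riesz_lemma hclosed hex (show (1 : ℝ) / 2 < 1 by norm_num)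
    have hy0 : (y : X) ≠ 0 := by
      intro h
      apply hyF
      have : y = 0 := Subtype.ext h
      rw [this]; exact F.zero_mem
    have hyn : (0 : ℝ) < ‖(y : X)‖ := norm_pos_iff.2 hy0
    refine ⟨‖(y : X)‖⁻¹ • (y : X), Submodule.smul_mem _ _ y.2, ?_, ?_⟩
    · rw [norm_smul, norm_inv, norm_norm, inv_mul_cancel₀ hyn.ne']
    · intro z hz
      have hz' : z ∈ E (n + 1) := hEmono (Nat.le_succ n) hz
      have hmemF : (⟨‖(y : X)‖ • z, Submodule.smul_mem _ _ hz'⟩ : E (n + 1)) ∈ F := by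
        simp only [hF, Submodule.mem_comap, Submodule.coe_subtype]
        exact Submodule.smul_mem _ _ hz
      have := hy _ hmemF
      have hnorm : ‖y - (⟨‖(y : X)‖ • z, Submodule.smul_mem _ _ hz'⟩ : E (n + 1))‖
          = ‖(y : X) - ‖(y : X)‖ • z‖ := rfl
      rw [hnorm] at this
      have hcalc : ‖(y : X)‖⁻¹ • (y : X) - z = ‖(y : X)‖⁻¹ • ((y : X) - ‖(y : X)‖ • z) := by
        rw [smul_sub, smul_smul, inv_mul_cancel₀ hyn.ne', one_smul]
      rw [hcalc, norm_smul, norm_inv, norm_norm]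
      calc (1 : ℝ) / 2 = ‖(y : X)‖⁻¹ * (1 / 2 * ‖(y : X)‖) := by
            field_simp
        _ ≤ ‖(y : X)‖⁻¹ * ‖(y : X) - ‖(y : X)‖ • z‖ := by
            apply mul_le_mul_of_nonneg_left this (by positivity)
  choose u hu1 hu2 hu3 using hriesz
  have hgap : ∀ m n : ℕ, m < n → (2 * R)⁻¹ ≤ ‖K (u n) - K (u m)‖ := by
    intro m n hmn
    set c := (μ (n + 1))⁻¹ with hc
    have hcne : c ≠ 0 := inv_ne_zero (hμ0 (n + 1))
    have hcabs : R⁻¹ ≤ |c| := by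
      rw [hc, abs_inv]
      exact inv_anti₀ (abs_pos.2 (hμ0 (n + 1))) (hbd (n + 1))
    have hd : K (u n) - c • u n ∈ E n := hmap n (u n) (hu1 n)
    have hKm : K (u m) ∈ E n := by
      have h1 : K (u m) - (μ (m + 1))⁻¹ • u m ∈ E m := hmap m (u m) (hu1 m)
      have h2 : (μ (m + 1))⁻¹ • u m ∈ E (m + 1) := Submodule.smul_mem _ _ (hu1 m)
      have h3 : K (u m) = (K (u m) - (μ (m + 1))⁻¹ • u m) + (μ (m + 1))⁻¹ • u m := by abel
      rw [h3]
      exact Submodule.add_mem _ (hEmono (Nat.le_of_lt hmn) h1) (hEmono hmn h2)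
    set z := c⁻¹ • (K (u m) - (K (u n) - c • u n)) with hz
    have hzE : z ∈ E n := Submodule.smul_mem _ _ (Submodule.sub_mem _ hKm hd)
    have hrw : K (u n) - K (u m) = c • (u n - z) := by
      rw [hz, smul_sub, smul_smul, mul_inv_cancel₀ hcne, one_smul]
      abel
    rw [hrw, norm_smul, Real.norm_eq_abs]
    have h12 := hu3 n z hzE
    calc (2 * R)⁻¹ = R⁻¹ * (1 / 2) := by rw [mul_inv]; ring
      _ ≤ |c| * ‖u n - z‖ := by
          apply mul_le_mul hcabs h12 (by norm_num) (abs_nonneg c)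
  have hbd' : Bornology.IsBounded (Set.range u) := by
    rw [isBounded_iff_forall_norm_le]
    exact ⟨1, by rintro y ⟨n, rfl⟩; rw [hu2 n]⟩
  have hK' : IsCompactOperator (K : X →ₗ[ℝ] X) := hK
  have hcpt : IsCompact (closure ((K : X →ₗ[ℝ] X) '' Set.range u)) :=
    hK'.isCompact_closure_image_of_bounded hbd'
  have hmem : ∀ n, K (u n) ∈ closure ((K : X →ₗ[ℝ] X) '' Set.range u) :=
    fun n => subset_closure ⟨u n, ⟨n, rfl⟩, rfl⟩
  obtain ⟨a, -, φ, hφ, hconv⟩ := hcpt.tendsto_subseq hmem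
  have hpos : (0 : ℝ) < (2 * R)⁻¹ / 2 := by positivity
  obtain ⟨M, hM⟩ := (Metric.tendsto_atTop.1 hconv) ((2 * R)⁻¹ / 2) hpos
  have h1 := hM M le_rfl
  have h2 := hM (M + 1) (Nat.le_succ M)
  have hlt : φ M < φ (M + 1) := hφ (Nat.lt_succ_self M)
  have hge := hgap (φ M) (φ (M + 1)) hlt
  have hdist : dist (K (u (φ (M + 1)))) (K (u (φ M))) < (2 * R)⁻¹ := by
    calc dist (K (u (φ (M + 1)))) (K (u (φ M)))
        ≤ dist (K (u (φ (M + 1)))) a + dist a (K (u (φ M))) := dist_triangle _ _ _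
      _ < (2 * R)⁻¹ / 2 + (2 * R)⁻¹ / 2 := by
          rw [dist_comm a]
          exact add_lt_add h2 h1
      _ = (2 * R)⁻¹ := by ring
  rw [dist_eq_norm] at hdist
  exact absurd hdist (not_lt.2 hge)

lemma charval_isolated {X : Type*} [NormedAddCommGroup X] [NormedSpace ℝ X] [CompleteSpace X]
    (K : X →L[ℝ] X) (hK : IsCompactOperator K)
    (lam0 : ℝ) (hlam0 : lam0 ≠ 0) :
    ∃ δ > 0, ∀ μ ∈ closure {lam : ℝ | ∃ x : X, x ≠ 0 ∧ x = lam • K x},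
      |μ - lam0| < δ → μ = lam0 := by
  classical
  set T : Set ℝ := {lam : ℝ | ∃ x : X, x ≠ 0 ∧ x = lam • K x} with hT
  have hhalf : (0 : ℝ) < |lam0| / 2 := by positivity
  have hnacc : lam0 ∉ closure (T \ {lam0}) := by
    intro hcl
    have hget : ∀ r : ℝ, 0 < r → ∃ t, t ∈ T ∧ t ≠ lam0 ∧ |t - lam0| < min r (|lam0| / 2) := by
      intro r hr
      obtain ⟨t, ht, hdist⟩ := Metric.mem_closure_iff.1 hcl (min r (|lam0| / 2))
        (lt_min hr hhalf)
      refine ⟨t, ht.1, fun h => ht.2 (by simp [h]), ?_⟩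
      rw [dist_comm] at hdist
      simpa [Real.dist_eq] using hdist
    set S := {t : ℝ // t ∈ T ∧ t ≠ lam0 ∧ |t - lam0| < |lam0| / 2} with hS
    have hstep : ∀ s : S, ∃ s' : S, |(s' : ℝ) - lam0| < |(s : ℝ) - lam0| := by
      intro s
      have hpos : 0 < |(s : ℝ) - lam0| := abs_pos.2 (sub_ne_zero.2 s.2.2.1)
      obtain ⟨t, ht1, ht2, ht3⟩ := hget _ hpos
      exact ⟨⟨t, ht1, ht2, lt_of_lt_of_le ht3 (min_le_right _ _)⟩,
        lt_of_lt_of_le ht3 (min_le_left _ _)⟩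
    choose step hstepspec using hstep
    obtain ⟨t0, ht01, ht02, ht03⟩ := hget _ hhalf
    set s0 : S := ⟨t0, ht01, ht02, lt_of_lt_of_le ht03 (min_le_right _ _)⟩ with hs0
    set f : ℕ → S := fun n => step^[n] s0 with hf
    have hdec : ∀ n, |(f (n + 1) : ℝ) - lam0| < |(f n : ℝ) - lam0| := by
      intro n
      have : f (n + 1) = step (f n) := Function.iterate_succ_apply' step n s0
      rw [this]
      exact hstepspec (f n)
    have hanti : StrictAnti (fun n => |(f n : ℝ) - lam0|) :=
      strictAnti_nat_of_succ_lt hdec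
    have hinj : Function.Injective (fun n => (f n : ℝ)) := by
      intro a b hab
      by_contra hne
      rcases lt_or_gt_of_ne hne with h | h
      · exact absurd (congrArg (fun t => |t - lam0|) hab) (ne_of_gt (hanti h))
      · exact absurd (congrArg (fun t => |t - lam0|) hab) (ne_of_lt (hanti h))
    have hbd : ∀ n, |(f n : ℝ)| ≤ |lam0| + |lam0| / 2 := by
      intro n
      have h2 := (f n).2.2.2
      calc |(f n : ℝ)| = |((f n : ℝ) - lam0) + lam0| := by ring_nf
        _ ≤ |(f n : ℝ) - lam0| + |lam0| := abs_add_le _ _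
        _ ≤ |lam0| + |lam0| / 2 := by linarith
    exact riesz_seq_core K hK _ _ hinj hbd (fun n => (f n).2.1)
  obtain ⟨δ, hδ, hgap⟩ := Metric.mem_closure_iff.not.1 hnacc |> fun h => by
    push_neg at h
    exact h
  refine ⟨δ / 2, by positivity, ?_⟩
  intro μ hμ hμδ
  by_contra hne
  have hpos : 0 < |μ - lam0| := abs_pos.2 (sub_ne_zero.2 hne)
  obtain ⟨t, ht, hdist⟩ := Metric.mem_closure_iff.1 hμ (min (δ / 2) (|μ - lam0|))
    (lt_min (by positivity) hpos)
  have htlam : |t - lam0| < δ := by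
    have h1 : |t - μ| < δ / 2 := by
      have := lt_of_lt_of_le hdist (min_le_left _ _)
      rw [dist_comm] at this
      simpa [Real.dist_eq] using this
    calc |t - lam0| = |(t - μ) + (μ - lam0)| := by ring_nf
      _ ≤ |t - μ| + |μ - lam0| := abs_add_le _ _
      _ < δ / 2 + δ / 2 := add_lt_add h1 hμδ
      _ = δ := by ring
  have hteq : t = lam0 := by
    by_contra ht'
    have hmem : t ∈ T \ {lam0} := ⟨ht, ht'⟩
    have := hgap t hmem
    rw [Real.dist_eq, abs_sub_comm] at this
    exact absurd htlam (not_lt.2 this)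
  rw [hteq] at hdist
  have := lt_of_lt_of_le hdist (min_le_right _ _)
  rw [Real.dist_eq, abs_sub_comm] at this
  exact absurd this (lt_irrefl _)

lemma eig_span {X : Type*} [NormedAddCommGroup X] [NormedSpace ℝ X]
    (K : X →L[ℝ] X) (lam0 : ℝ) (hsimple : charMult K lam0 = 1)
    (v : X) (hv : v ≠ 0) (hKv : K v = lam0⁻¹ • v) :
    ∀ x : X, K x = lam0⁻¹ • x → ∃ t : ℝ, x = t • v := by
  intro x hx
  have hsimple' : Module.finrank ℝ (Module.End.maxGenEigenspace (K : X →ₗ[ℝ] X) lam0⁻¹) = 1 :=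
    hsimple
  set M := Module.End.maxGenEigenspace (K : X →ₗ[ℝ] X) lam0⁻¹ with hM
  haveI : FiniteDimensional ℝ M := FiniteDimensional.of_finrank_pos (by rw [hsimple']; norm_num)
  have hmem : ∀ w : X, K w = lam0⁻¹ • w → w ∈ M := by
    intro w hw
    rw [hM, Module.End.mem_maxGenEigenspace]
    refine ⟨1, ?_⟩
    simp [pow_one, LinearMap.sub_apply, hw, sub_eq_zero]
  have hspan : (Submodule.span ℝ {v} : Submodule ℝ X) = M := by
    apply Submodule.eq_of_le_of_finrank_le
    · rw [Submodule.span_le, Set.singleton_subset_iff]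
      exact hmem v hKv
    · rw [hsimple', finrank_span_singleton hv]
  have hx' : x ∈ Submodule.span ℝ ({v} : Set X) := hspan ▸ hmem x hx
  obtain ⟨t, ht⟩ := Submodule.mem_span_singleton.1 hx'
  exact ⟨t, ht.symm⟩

end AuxLemmas

set_option maxHeartbeats 1000000 in
/-- For `Ω = closure(𝔠₀⁺) ∪ (closure(𝔠₀⁻) ∩ 𝔛_{λ₀}(N))` and `H ≡ 0`:
`C_{λ₀}⁻(F)` is bounded, the closure of `C_{λ₀}⁺(F)` does not meet `∂Ω`, and
`C_{λ₀}⁺(F) ∩ C_{λ₀}⁻(F) = {(0,λ₀)}`. -/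
theorem counterexample_asymmetric_alternatives
    {X : Type*} [NormedAddCommGroup X] [NormedSpace ℝ X] [CompleteSpace X]
    (lam0 : ℝ) (hlam0 : lam0 ≠ 0) (K : X →L[ℝ] X) (hK : IsCompactOperator K)
    (hchar : CharVal K lam0) (hsimple : charMult K lam0 = 1)
    (v : X) (hv : ‖v‖ = 1) (hKv : K v = lam0⁻¹ • v)
    (l : X →L[ℝ] ℝ) (hl : ∀ x : X, l (K x) = lam0⁻¹ * l x) (hlv : l v = 1)
    (N : ℝ) (hN : 0 < N) :
    Bornology.IsBounded
        (Cdir (Fmap K (fun _ => 0))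
          (closure (cone l 1 0) ∪ (closure (cone l (-1) 0) ∩ ball0 X lam0 N))
          lam0 l (-1)) ∧
      closure (Cdir (Fmap K (fun _ => 0))
            (closure (cone l 1 0) ∪ (closure (cone l (-1) 0) ∩ ball0 X lam0 N))
            lam0 l 1) ∩
          frontier (closure (cone l 1 0) ∪ (closure (cone l (-1) 0) ∩ ball0 X lam0 N)) =
        ∅ ∧
      Cdir (Fmap K (fun _ => 0))
          (closure (cone l 1 0) ∪ (closure (cone l (-1) 0) ∩ ball0 X lam0 N))
          lam0 l 1 ∩
        Cdir (Fmap K (fun _ => 0))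
          (closure (cone l 1 0) ∪ (closure (cone l (-1) 0) ∩ ball0 X lam0 N))
          lam0 l (-1) =
      {((0 : X), lam0)} := by
  classical
  have hv0 : v ≠ 0 := by
    intro h
    rw [h, norm_zero] at hv
    norm_num at hv
  set Ω : Set (X × ℝ) := closure (cone l 1 0) ∪ (closure (cone l (-1) 0) ∩ ball0 X lam0 N)
    with hΩdef
  set F : X × ℝ → X := Fmap K (fun _ => 0) with hFdef
  have hFeq : ∀ p : X × ℝ, F p = p.1 - p.2 • K p.1 := by
    intro p
    simp [hFdef, Fmap]
  have hlt : ∀ t : ℝ, l (t • v) = t := by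
    intro t
    rw [map_smul, hlv, smul_eq_mul, mul_one]
  have hFline : ∀ t : ℝ, F (t • v, lam0) = 0 := by
    intro t
    rw [hFeq]
    show t • v - lam0 • K (t • v) = 0
    rw [map_smul, hKv, smul_comm lam0 t, smul_smul lam0, mul_inv_cancel₀ hlam0, one_smul,
      sub_self]
  have hvnorm : ∀ t : ℝ, ‖t • v‖ = |t| := by
    intro t
    rw [norm_smul, hv, mul_one, Real.norm_eq_abs]
  -- membership in the closures of the two cones
  have hplus : ∀ p : X × ℝ, 0 ≤ l p.1 → p ∈ closure (cone l 1 0) := by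
    intro p hp
    have hc : Filter.Tendsto (fun n : ℕ => 1 / ((n : ℝ) + 1)) Filter.atTop (nhds 0) :=
      tendsto_one_div_add_atTop_nhds_zero_nat
    have htd : Filter.Tendsto (fun n : ℕ => ((p.1 + (1 / ((n : ℝ) + 1)) • v, p.2) : X × ℝ))
        Filter.atTop (nhds p) := by
      have h1 : Filter.Tendsto (fun n : ℕ => p.1 + (1 / ((n : ℝ) + 1)) • v)
          Filter.atTop (nhds p.1) := by
        have := Filter.Tendsto.add (tendsto_const_nhds (x := p.1)) (hc.smul_const v)
        simpa using this
      have := h1.prodMk_nhds (tendsto_const_nhds (x := p.2))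
      simpa using this
    refine mem_closure_of_tendsto htd (Filter.Eventually.of_forall fun n => ?_)
    show 0 * ‖p.1 + (1 / ((n : ℝ) + 1)) • v‖ < 1 * l (p.1 + (1 / ((n : ℝ) + 1)) • v)
    have hn : 0 < 1 / ((n : ℝ) + 1) := by positivity
    rw [zero_mul, one_mul, map_add, map_smul, hlv, smul_eq_mul, mul_one]
    linarith
  have hminus : ∀ p : X × ℝ, l p.1 ≤ 0 → p ∈ closure (cone l (-1) 0) := by
    intro p hp
    have hc : Filter.Tendsto (fun n : ℕ => 1 / ((n : ℝ) + 1)) Filter.atTop (nhds 0) :=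
      tendsto_one_div_add_atTop_nhds_zero_nat
    have htd : Filter.Tendsto (fun n : ℕ => ((p.1 - (1 / ((n : ℝ) + 1)) • v, p.2) : X × ℝ))
        Filter.atTop (nhds p) := by
      have h1 : Filter.Tendsto (fun n : ℕ => p.1 - (1 / ((n : ℝ) + 1)) • v)
          Filter.atTop (nhds p.1) := by
        have := Filter.Tendsto.sub (tendsto_const_nhds (x := p.1)) (hc.smul_const v)
        simpa using this
      have := h1.prodMk_nhds (tendsto_const_nhds (x := p.2))
      simpa using this
    refine mem_closure_of_tendsto htd (Filter.Eventually.of_forall fun n => ?_)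
    show 0 * ‖p.1 - (1 / ((n : ℝ) + 1)) • v‖ < -1 * l (p.1 - (1 / ((n : ℝ) + 1)) • v)
    have hn : 0 < 1 / ((n : ℝ) + 1) := by positivity
    rw [zero_mul, map_sub, map_smul, hlv, smul_eq_mul, mul_one]
    linarith
  have hplus_sub : closure (cone l 1 0) ⊆ {p : X × ℝ | 0 ≤ l p.1} := by
    apply closure_minimal
    · intro p hp
      have : (0 : ℝ) * ‖p.1‖ < 1 * l p.1 := hp
      rw [zero_mul, one_mul] at this
      exact le_of_lt this
    · exact isClosed_le continuous_const (l.continuous.comp continuous_fst)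
  have hΩline : ∀ t : ℝ, -N < t → ((t • v, lam0) : X × ℝ) ∈ Ω := by
    intro t ht
    rcases le_or_gt 0 t with h | h
    · exact Or.inl (hplus _ (by rw [hlt]; exact h))
    · refine Or.inr ⟨hminus _ (by rw [hlt]; exact le_of_lt h), ?_⟩
      show ‖t • v‖ + |lam0 - lam0| < N
      rw [hvnorm, sub_self, abs_zero, add_zero, abs_of_neg h]
      linarith
  have hballΩ : ball0 X lam0 N ⊆ Ω := by
    intro p hp
    rcases le_or_gt (l p.1) 0 with h | h
    · exact Or.inr ⟨hminus p h, hp⟩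
    · refine Or.inl (subset_closure ?_)
      show 0 * ‖p.1‖ < 1 * l p.1
      rw [zero_mul, one_mul]
      exact h
  have hptΩ : (((0 : X), lam0) : X × ℝ) ∈ Ω := by
    apply hballΩ
    show ‖((0 : X), lam0).1‖ + |lam0 - lam0| < N
    rw [norm_zero, sub_self, abs_zero, add_zero]
    exact hN
  -- characteristic value set
  set T : Set ℝ := {lam : ℝ | ∃ x : X, x ≠ 0 ∧ x = lam • K x} with hTdef
  have hTlam0 : lam0 ∈ T := by
    refine ⟨v, hv0, ?_⟩
    rw [hKv, smul_smul, mul_inv_cancel₀ hlam0, one_smul]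
  obtain ⟨δ, hδ, hiso⟩ := charval_isolated K hK lam0 hlam0
  -- solution set analysis
  set S : Set (X × ℝ) := SolClosure F Ω ∪ {((0 : X), lam0)} with hSdef
  have hFcont : Continuous F := by
    rw [hFdef]
    show Continuous fun p : X × ℝ => p.1 - p.2 • K p.1 - (0 : X)
    exact (continuous_fst.sub (continuous_snd.smul (K.continuous.comp continuous_fst))).sub
      continuous_const
  have hSsol : ∀ p ∈ S, p.1 = p.2 • K p.1 := by
    rintro p (hp | hp)
    · have h1 : p ∈ closure {q : X × ℝ | q ∈ Ω ∧ F q = 0 ∧ q.1 ≠ 0} := hp.1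
      have h2 : closure {q : X × ℝ | q ∈ Ω ∧ F q = 0 ∧ q.1 ≠ 0} ⊆ {q : X × ℝ | F q = 0} :=
        closure_minimal (fun q hq => hq.2.1) (isClosed_eq hFcont continuous_const)
      have h3 := h2 h1
      have h4 : p.1 - p.2 • K p.1 = 0 := by rw [← hFeq]; exact h3
      exact sub_eq_zero.1 h4
    · rw [Set.mem_singleton_iff] at hp
      rw [hp]
      show (0 : X) = lam0 • K 0
      rw [map_zero, smul_zero]
  have hSΩ : S ⊆ Ω := by
    rintro p (hp | hp)
    · exact hp.2
    · rw [Set.mem_singleton_iff] at hp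
      rw [hp]
      exact hptΩ
  have hSlam : ∀ p ∈ S, p.2 ∈ closure T := by
    rintro p (hp | hp)
    · have h1 : p ∈ closure {q : X × ℝ | q ∈ Ω ∧ F q = 0 ∧ q.1 ≠ 0} := hp.1
      have h2 : p.2 ∈ Prod.snd '' closure {q : X × ℝ | q ∈ Ω ∧ F q = 0 ∧ q.1 ≠ 0} :=
        ⟨p, h1, rfl⟩
      have h3 := image_closure_subset_closure_image (f := Prod.snd) continuous_snd h2
      refine closure_mono ?_ h3
      rintro lam ⟨q, hq, rfl⟩
      refine ⟨q.1, hq.2.2, ?_⟩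
      have h4 : q.1 - q.2 • K q.1 = 0 := by rw [← hFeq]; exact hq.2.1
      exact sub_eq_zero.1 h4
    · rw [Set.mem_singleton_iff] at hp
      rw [hp]
      exact subset_closure hTlam0
  -- the component
  have hCdefeq : Ccomp F Ω lam0 = connectedComponentIn S ((0 : X), lam0) := rfl
  have hptS : (((0 : X), lam0) : X × ℝ) ∈ S := Or.inr rfl
  have hptC : (((0 : X), lam0) : X × ℝ) ∈ Ccomp F Ω lam0 := by
    rw [hCdefeq]; exact mem_connectedComponentIn hptS
  have hCS : Ccomp F Ω lam0 ⊆ S := by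
    rw [hCdefeq]; exact connectedComponentIn_subset _ _
  have hCconn : IsPreconnected (Ccomp F Ω lam0) := by
    rw [hCdefeq]; exact isPreconnected_connectedComponentIn
  have hClam : ∀ p ∈ Ccomp F Ω lam0, p.2 = lam0 := by
    intro p hp
    by_contra hne
    have hJconn : IsPreconnected (Prod.snd '' Ccomp F Ω lam0) :=
      hCconn.image _ continuous_snd.continuousOn
    have hJsub : Prod.snd '' Ccomp F Ω lam0 ⊆ closure T := by
      rintro _ ⟨q, hq, rfl⟩
      exact hSlam q (hCS hq)
    have hl0J : lam0 ∈ Prod.snd '' Ccomp F Ω lam0 := ⟨((0 : X), lam0), hptC, rfl⟩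
    have hμJ : p.2 ∈ Prod.snd '' Ccomp F Ω lam0 := ⟨p, hp, rfl⟩
    rcases lt_or_gt_of_ne hne with h | h
    · have hIcc := hJconn.Icc_subset hμJ hl0J
      have hν : max p.2 (lam0 - δ / 2) ∈ Set.Icc p.2 lam0 :=
        ⟨le_max_left _ _, max_le (le_of_lt h) (by linarith)⟩
      have hνJ := hJsub (hIcc hν)
      have habs : |max p.2 (lam0 - δ / 2) - lam0| < δ := by
        rw [abs_lt]
        constructor
        · have := le_max_right p.2 (lam0 - δ / 2)
          linarith
        · have : max p.2 (lam0 - δ / 2) ≤ lam0 := max_le (le_of_lt h) (by linarith)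
          linarith
      have heq := hiso _ hνJ habs
      have hlt' : max p.2 (lam0 - δ / 2) < lam0 := max_lt h (by linarith)
      rw [heq] at hlt'
      exact lt_irrefl _ hlt'
    · have hIcc := hJconn.Icc_subset hl0J hμJ
      have hν : min p.2 (lam0 + δ / 2) ∈ Set.Icc lam0 p.2 :=
        ⟨le_min (le_of_lt h) (by linarith), min_le_left _ _⟩
      have hνJ := hJsub (hIcc hν)
      have habs : |min p.2 (lam0 + δ / 2) - lam0| < δ := by
        rw [abs_lt]
        constructor
        · have : lam0 ≤ min p.2 (lam0 + δ / 2) := le_min (le_of_lt h) (by linarith)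
          linarith
        · have := min_le_right p.2 (lam0 + δ / 2)
          linarith
      have heq := hiso _ hνJ habs
      have hlt' : lam0 < min p.2 (lam0 + δ / 2) := lt_min h (by linarith)
      rw [heq] at hlt'
      exact lt_irrefl _ hlt'
  have heig := eig_span K lam0 hsimple v hv0 hKv
  set Lset : Set (X × ℝ) := {p : X × ℝ | ∃ t : ℝ, -N < t ∧ p = (t • v, lam0)} with hLdef
  have hCL : Ccomp F Ω lam0 ⊆ Lset := by
    intro p hp
    have h2 := hClam p hp
    have h1 := hSsol p (hCS hp)
    rw [h2] at h1
    have hK1 : K p.1 = lam0⁻¹ • p.1 := by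
      have h5 := congrArg (fun w : X => lam0⁻¹ • w) h1
      rw [smul_smul, inv_mul_cancel₀ hlam0, one_smul] at h5
      exact h5.symm
    obtain ⟨t, ht⟩ := heig p.1 hK1
    have hpΩ : p ∈ Ω := hSΩ (hCS hp)
    have hplt : -N < t := by
      rcases le_or_gt 0 t with hle | hlt'
      · linarith
      · rcases hpΩ with hc | ⟨_, hb⟩
        · exfalso
          have h6 := hplus_sub hc
          simp only [Set.mem_setOf_eq] at h6
          rw [ht, hlt] at h6
          exact absurd h6 (not_le.2 hlt')
        · have hb' : ‖p.1‖ + |lam0 - p.2| < N := hb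
          rw [ht, hvnorm, h2, sub_self, abs_zero, add_zero, abs_of_neg hlt'] at hb'
          linarith
    exact ⟨t, hplt, Prod.ext ht h2⟩
  have hptL : (((0 : X), lam0) : X × ℝ) ∈ Lset := ⟨0, by linarith, by rw [zero_smul]⟩
  have hLS : Lset ⊆ S := by
    rintro p ⟨t, htN, rfl⟩
    rcases eq_or_ne t 0 with rfl | ht0
    · right
      rw [Set.mem_singleton_iff, zero_smul]
    · left
      exact ⟨subset_closure ⟨hΩline t htN, hFline t, smul_ne_zero ht0 hv0⟩, hΩline t htN⟩
  have hLconn : IsPreconnected Lset := by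
    have himg : Lset = (fun t : ℝ => ((t • v, lam0) : X × ℝ)) '' Set.Ioi (-N) := by
      ext p
      constructor
      · rintro ⟨t, ht, rfl⟩
        exact ⟨t, ht, rfl⟩
      · rintro ⟨t, ht, rfl⟩
        exact ⟨t, ht, rfl⟩
    rw [himg]
    exact isPreconnected_Ioi.image _
      ((continuous_id.smul continuous_const).prodMk continuous_const).continuousOn
  have hLC : Lset ⊆ Ccomp F Ω lam0 := by
    rw [hCdefeq]
    exact hLconn.subset_connectedComponentIn hptL hLS
  have hCeq : Ccomp F Ω lam0 = Lset := Set.Subset.antisymm hCL hLC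
  -- frontier lemmas for ball0
  have hball_cont : Continuous (fun p : X × ℝ => ‖p.1‖ + |lam0 - p.2|) :=
    continuous_fst.norm.add (continuous_const.sub continuous_snd).abs
  have hball_open : ∀ ε : ℝ, IsOpen (ball0 X lam0 ε) :=
    fun ε => isOpen_lt hball_cont continuous_const
  have hfront_sub : ∀ ε : ℝ, frontier (ball0 X lam0 ε) ⊆
      {p : X × ℝ | ‖p.1‖ + |lam0 - p.2| = ε} := by
    intro ε p hp
    rw [(hball_open ε).frontier_eq] at hp
    have hle : ‖p.1‖ + |lam0 - p.2| ≤ ε := by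
      have hcl : closure (ball0 X lam0 ε) ⊆ {p : X × ℝ | ‖p.1‖ + |lam0 - p.2| ≤ ε} :=
        closure_minimal (fun q hq => le_of_lt (show ‖q.1‖ + |lam0 - q.2| < ε from hq))
          (isClosed_le hball_cont continuous_const)
      exact hcl hp.1
    exact le_antisymm hle (not_lt.1 hp.2)
  have hfront_mem : ∀ (t ε : ℝ), 0 < ε → |t| = ε →
      ((t • v, lam0) : X × ℝ) ∈ frontier (ball0 X lam0 ε) := by
    intro t ε hε habs
    rw [(hball_open ε).frontier_eq]
    constructor
    · have hc : Filter.Tendsto (fun n : ℕ => t * (1 - 1 / ((n : ℝ) + 1)))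
          Filter.atTop (nhds t) := by
        have h1 : Filter.Tendsto (fun n : ℕ => 1 / ((n : ℝ) + 1)) Filter.atTop (nhds 0) :=
          tendsto_one_div_add_atTop_nhds_zero_nat
        have h2 : Filter.Tendsto (fun n : ℕ => 1 - 1 / ((n : ℝ) + 1)) Filter.atTop (nhds 1) := by
          have := Filter.Tendsto.sub (tendsto_const_nhds (x := (1 : ℝ))) h1
          simpa using this
        have := Filter.Tendsto.mul (tendsto_const_nhds (x := t)) h2
        simpa using this
      have hφ : Continuous (fun s : ℝ => ((s • v, lam0) : X × ℝ)) :=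
        (continuous_id.smul continuous_const).prodMk continuous_const
      have htd : Filter.Tendsto
          (fun n : ℕ => (((t * (1 - 1 / ((n : ℝ) + 1))) • v, lam0) : X × ℝ))
          Filter.atTop (nhds ((t • v, lam0) : X × ℝ)) := (hφ.tendsto t).comp hc
      refine mem_closure_of_tendsto htd (Filter.Eventually.of_forall fun n => ?_)
      show ‖(t * (1 - 1 / ((n : ℝ) + 1))) • v‖ + |lam0 - lam0| < ε
      rw [hvnorm, sub_self, abs_zero, add_zero, abs_mul]
      have hn1 : 0 < 1 / ((n : ℝ) + 1) := by positivity
      have hn2 : 1 / ((n : ℝ) + 1) ≤ 1 := by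
        rw [div_le_one (by positivity)]
        simp
      have hlt1 : |1 - 1 / ((n : ℝ) + 1)| < 1 := by
        rw [abs_of_nonneg (by linarith)]
        linarith
      calc |t| * |1 - 1 / ((n : ℝ) + 1)| < |t| * 1 :=
            mul_lt_mul_of_pos_left hlt1 (by rw [habs]; exact hε)
        _ = ε := by rw [mul_one, habs]
    · show ¬(‖t • v‖ + |lam0 - lam0| < ε)
      rw [hvnorm, sub_self, abs_zero, add_zero, habs]
      exact lt_irrefl ε
  -- the two half-lines
  set Qp : Set (X × ℝ) := {p : X × ℝ | ∃ t : ℝ, 0 ≤ t ∧ p = (t • v, lam0)} with hQpdef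
  set Qm : Set (X × ℝ) := {p : X × ℝ | ∃ t : ℝ, -N < t ∧ t ≤ 0 ∧ p = (t • v, lam0)} with hQmdef
  have hptQp : (((0 : X), lam0) : X × ℝ) ∈ Qp := ⟨0, le_rfl, by rw [zero_smul]⟩
  have hptQm : (((0 : X), lam0) : X × ℝ) ∈ Qm := ⟨0, by linarith, le_rfl, by rw [zero_smul]⟩
  have hQpL : Qp ⊆ Lset := by
    rintro p ⟨t, ht, rfl⟩
    exact ⟨t, by linarith, rfl⟩
  have hQmL : Qm ⊆ Lset := by
    rintro p ⟨t, ht1, ht2, rfl⟩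
    exact ⟨t, ht1, rfl⟩
  have hQpbranch : IsBranch F Ω lam0 l 1 Qp := by
    refine ⟨fun p hp => hLC (hQpL hp), ?_, hptQp, ?_⟩
    · have himg : Qp = (fun t : ℝ => ((t • v, lam0) : X × ℝ)) '' Set.Ici 0 := by
        ext p
        constructor
        · rintro ⟨t, ht, rfl⟩
          exact ⟨t, ht, rfl⟩
        · rintro ⟨t, ht, rfl⟩
          exact ⟨t, ht, rfl⟩
      rw [himg]
      exact isPreconnected_Ici.image _
        ((continuous_id.smul continuous_const).prodMk continuous_const).continuousOn
    · intro y hy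
      refine ⟨1, one_pos, fun ε hε hε1 => ⟨⟨(ε • v, lam0), ⟨ε, le_of_lt hε, rfl⟩,
        hfront_mem ε ε hε (abs_of_pos hε)⟩, ?_⟩⟩
      rintro p ⟨⟨t, ht0, rfl⟩, hfr⟩
      have h1 := hfront_sub ε hfr
      have h2 : ‖t • v‖ + |lam0 - lam0| = ε := h1
      rw [hvnorm, sub_self, abs_zero, add_zero, abs_of_nonneg ht0] at h2
      show y * ‖t • v‖ < 1 * l (t • v)
      rw [hvnorm, hlt, one_mul, abs_of_nonneg ht0, h2]
      calc y * ε < 1 * ε := mul_lt_mul_of_pos_right hy.2 hε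
        _ = ε := one_mul ε
  have hQmbranch : IsBranch F Ω lam0 l (-1) Qm := by
    refine ⟨fun p hp => hLC (hQmL hp), ?_, hptQm, ?_⟩
    · have himg : Qm = (fun t : ℝ => ((t • v, lam0) : X × ℝ)) '' Set.Ioc (-N) 0 := by
        ext p
        constructor
        · rintro ⟨t, ht1, ht2, rfl⟩
          exact ⟨t, ⟨ht1, ht2⟩, rfl⟩
        · rintro ⟨t, ⟨ht1, ht2⟩, rfl⟩
          exact ⟨t, ht1, ht2, rfl⟩
      rw [himg]
      exact isPreconnected_Ioc.image _
        ((continuous_id.smul continuous_const).prodMk continuous_const).continuousOn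
    · intro y hy
      refine ⟨N, hN, fun ε hε hεN => ⟨⟨((-ε) • v, lam0), ⟨-ε, by linarith, by linarith, rfl⟩,
        hfront_mem (-ε) ε hε (by rw [abs_neg, abs_of_pos hε])⟩, ?_⟩⟩
      rintro p ⟨⟨t, ht1, ht2, rfl⟩, hfr⟩
      have h1 := hfront_sub ε hfr
      have h2 : ‖t • v‖ + |lam0 - lam0| = ε := h1
      rw [hvnorm, sub_self, abs_zero, add_zero, abs_of_nonpos ht2] at h2
      show y * ‖t • v‖ < -1 * l (t • v)
      rw [hvnorm, hlt, abs_of_nonpos ht2, h2]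
      have : -1 * t = ε := by linarith
      rw [this]
      calc y * ε < 1 * ε := mul_lt_mul_of_pos_right hy.2 hε
        _ = ε := one_mul ε
  have hbranch_p : ∀ Q, IsBranch F Ω lam0 l 1 Q → Q ⊆ Qp := by
    intro Q hQ p hp
    have hpL : p ∈ Lset := hCeq ▸ hQ.1 hp
    obtain ⟨t, htN, rfl⟩ := hpL
    rcases le_or_gt 0 t with h | h
    · exact ⟨t, h, rfl⟩
    · exfalso
      obtain ⟨εy, hεy, hcond⟩ := hQ.2.2.2 (1 / 2) ⟨by norm_num, by norm_num⟩
      have hmin : 0 < min εy (-t) := lt_min hεy (by linarith)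
      set ε := min εy (-t) / 2 with hεdef
      have hε0 : 0 < ε := by positivity
      have hεεy : ε < εy := by
        have := min_le_left εy (-t)
        rw [hεdef]
        linarith
      have hεt : ε ≤ -t := by
        have := min_le_right εy (-t)
        rw [hεdef]
        linarith
      obtain ⟨hne, hsub⟩ := hcond ε hε0 hεεy
      have himage : IsPreconnected ((fun q : X × ℝ => l q.1) '' Q) :=
        hQ.2.1.image _ (l.continuous.comp continuous_fst).continuousOn
      have h0m : (0 : ℝ) ∈ (fun q : X × ℝ => l q.1) '' Q :=
        ⟨((0 : X), lam0), hQ.2.2.1, by simp⟩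
      have htm : t ∈ (fun q : X × ℝ => l q.1) '' Q := ⟨(t • v, lam0), hp, hlt t⟩
      have hIcc := himage.Icc_subset htm h0m
      obtain ⟨q, hqQ, hql⟩ := hIcc (show -ε ∈ Set.Icc t 0 from ⟨by linarith, by linarith⟩)
      obtain ⟨s, hsN, hqeq⟩ := hCeq ▸ hQ.1 hqQ
      have hseq : s = -ε := by
        rw [hqeq] at hql
        simpa [hlt] using hql
      have hqfr : q ∈ frontier (ball0 X lam0 ε) := by
        rw [hqeq, hseq]
        exact hfront_mem (-ε) ε hε0 (by rw [abs_neg, abs_of_pos hε0])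
      have hcone := hsub ⟨hqQ, hqfr⟩
      have : (1 : ℝ) / 2 * ‖q.1‖ < 1 * l q.1 := hcone
      rw [hqeq, hseq] at this
      have h5 : l ((-ε) • v) = -ε := hlt (-ε)
      rw [hvnorm, abs_neg, abs_of_pos hε0, h5, one_mul] at this
      linarith
  have hbranch_m : ∀ Q, IsBranch F Ω lam0 l (-1) Q → Q ⊆ Qm := by
    intro Q hQ p hp
    have hpL : p ∈ Lset := hCeq ▸ hQ.1 hp
    obtain ⟨t, htN, rfl⟩ := hpL
    rcases le_or_gt t 0 with h | h
    · exact ⟨t, htN, h, rfl⟩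
    · exfalso
      obtain ⟨εy, hεy, hcond⟩ := hQ.2.2.2 (1 / 2) ⟨by norm_num, by norm_num⟩
      have hmin : 0 < min εy t := lt_min hεy h
      set ε := min εy t / 2 with hεdef
      have hε0 : 0 < ε := by positivity
      have hεεy : ε < εy := by
        have := min_le_left εy t
        rw [hεdef]
        linarith
      have hεt : ε ≤ t := by
        have := min_le_right εy t
        rw [hεdef]
        linarith
      obtain ⟨hne, hsub⟩ := hcond ε hε0 hεεy
      have himage : IsPreconnected ((fun q : X × ℝ => l q.1) '' Q) :=
        hQ.2.1.image _ (l.continuous.comp continuous_fst).continuousOn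
      have h0m : (0 : ℝ) ∈ (fun q : X × ℝ => l q.1) '' Q :=
        ⟨((0 : X), lam0), hQ.2.2.1, by simp⟩
      have htm : t ∈ (fun q : X × ℝ => l q.1) '' Q := ⟨(t • v, lam0), hp, hlt t⟩
      have hIcc := himage.Icc_subset h0m htm
      obtain ⟨q, hqQ, hql⟩ := hIcc (show ε ∈ Set.Icc 0 t from ⟨by linarith, by linarith⟩)
      obtain ⟨s, hsN, hqeq⟩ := hCeq ▸ hQ.1 hqQ
      have hseq : s = ε := by
        rw [hqeq] at hql
        simpa [hlt] using hql
      have hqfr : q ∈ frontier (ball0 X lam0 ε) := by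
        rw [hqeq, hseq]
        exact hfront_mem ε ε hε0 (abs_of_pos hε0)
      have hcone := hsub ⟨hqQ, hqfr⟩
      have : (1 : ℝ) / 2 * ‖q.1‖ < -1 * l q.1 := hcone
      rw [hqeq, hseq] at this
      have h5 : l (ε • v) = ε := hlt ε
      rw [hvnorm, abs_of_pos hε0, h5] at this
      linarith
  have hUp : ({(((0 : X), lam0) : X × ℝ)} : Set (X × ℝ)) ∪
      ⋃₀ {Q | IsBranch F Ω lam0 l 1 Q} = Qp := by
    apply Set.Subset.antisymm
    · rintro p (hp | ⟨Q, hQ, hpQ⟩)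
      · rw [Set.mem_singleton_iff] at hp
        rw [hp]
        exact hptQp
      · exact hbranch_p Q hQ hpQ
    · intro p hp
      exact Or.inr ⟨Qp, hQpbranch, hp⟩
  have hUm : ({(((0 : X), lam0) : X × ℝ)} : Set (X × ℝ)) ∪
      ⋃₀ {Q | IsBranch F Ω lam0 l (-1) Q} = Qm := by
    apply Set.Subset.antisymm
    · rintro p (hp | ⟨Q, hQ, hpQ⟩)
      · rw [Set.mem_singleton_iff] at hp
        rw [hp]
        exact hptQm
      · exact hbranch_m Q hQ hpQ
    · intro p hp
      exact Or.inr ⟨Qm, hQmbranch, hp⟩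
  have hQpclosed : IsClosed Qp := by
    have hQpeq : Qp = {p : X × ℝ | p.2 = lam0} ∩ {p : X × ℝ | p.1 - l p.1 • v = 0} ∩
        {p : X × ℝ | 0 ≤ l p.1} := by
      ext p
      constructor
      · rintro ⟨t, ht, rfl⟩
        refine ⟨⟨rfl, ?_⟩, ?_⟩
        · show t • v - l (t • v) • v = 0
          rw [hlt, sub_self]
        · show (0 : ℝ) ≤ l (t • v)
          rw [hlt]
          exact ht
      · rintro ⟨⟨h2, h1⟩, h3⟩
        exact ⟨l p.1, h3, Prod.ext (sub_eq_zero.1 h1).symm.symm h2⟩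
    rw [hQpeq]
    refine (IsClosed.inter (isClosed_eq continuous_snd continuous_const)
      (isClosed_eq ?_ continuous_const)).inter
      (isClosed_le continuous_const (l.continuous.comp continuous_fst))
    exact continuous_fst.sub ((l.continuous.comp continuous_fst).smul continuous_const)
  set Qmbar : Set (X × ℝ) := {p : X × ℝ | p.2 = lam0 ∧ p.1 = l p.1 • v ∧
      -N ≤ l p.1 ∧ l p.1 ≤ 0} with hQmbardef
  have hQmbarclosed : IsClosed Qmbar := by
    have hQmbareq : Qmbar = ({p : X × ℝ | p.2 = lam0} ∩ {p : X × ℝ | p.1 - l p.1 • v = 0}) ∩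
        ({p : X × ℝ | -N ≤ l p.1} ∩ {p : X × ℝ | l p.1 ≤ 0}) := by
      ext p
      constructor
      · rintro ⟨h1, h2, h3, h4⟩
        exact ⟨⟨h1, sub_eq_zero.2 h2⟩, h3, h4⟩
      · rintro ⟨⟨h1, h2⟩, h3, h4⟩
        exact ⟨h1, sub_eq_zero.1 h2, h3, h4⟩
    rw [hQmbareq]
    refine IsClosed.inter (IsClosed.inter (isClosed_eq continuous_snd continuous_const)
      (isClosed_eq (continuous_fst.sub ((l.continuous.comp continuous_fst).smul
        continuous_const)) continuous_const)) (IsClosed.inter ?_ ?_)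
    · exact isClosed_le continuous_const (l.continuous.comp continuous_fst)
    · exact isClosed_le (l.continuous.comp continuous_fst) continuous_const
  have hQmsub : Qm ⊆ Qmbar := by
    rintro p ⟨t, ht1, ht2, rfl⟩
    refine ⟨rfl, ?_, ?_, ?_⟩
    · show t • v = l (t • v) • v
      rw [hlt]
    · show -N ≤ l (t • v)
      rw [hlt]
      linarith
    · show l (t • v) ≤ 0
      rw [hlt]
      exact ht2
  have hclosQm : closure Qm ⊆ Qmbar := closure_minimal hQmsub hQmbarclosed
  have hCdirm : Cdir F Ω lam0 l (-1) ⊆ Qmbar := by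
    intro p hp
    have hp1 : p ∈ closure ({(((0 : X), lam0) : X × ℝ)} ∪
        ⋃₀ {Q | IsBranch F Ω lam0 l (-1) Q}) := hp.1
    rw [hUm] at hp1
    exact hclosQm hp1
  have hCdirp : Cdir F Ω lam0 l 1 ⊆ Qp := by
    intro p hp
    have hp1 : p ∈ closure ({(((0 : X), lam0) : X × ℝ)} ∪
        ⋃₀ {Q | IsBranch F Ω lam0 l 1 Q}) := hp.1
    rw [hUp, hQpclosed.closure_eq] at hp1
    exact hp1
  refine ⟨?_, ?_, ?_⟩
  · -- boundedness of Cdir⁻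
    rw [isBounded_iff_forall_norm_le]
    refine ⟨max N |lam0|, fun p hp => ?_⟩
    have hq := hCdirm hp
    rw [Prod.norm_def]
    apply max_le
    · rw [hq.2.1, hvnorm]
      have : |l p.1| ≤ N := abs_le.2 ⟨hq.2.2.1, le_trans hq.2.2.2 (le_of_lt hN)⟩
      exact le_trans this (le_max_left _ _)
    · rw [Real.norm_eq_abs, hq.1]
      exact le_max_right _ _
  · -- closure of Cdir⁺ misses the frontier of Ω
    rw [Set.eq_empty_iff_forall_notMem]
    rintro p ⟨hp1, hp2⟩
    have hpQp : p ∈ Qp := closure_minimal hCdirp hQpclosed hp1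
    obtain ⟨t, ht, rfl⟩ := hpQp
    have hint : ((t • v, lam0) : X × ℝ) ∈ interior Ω := by
      rcases eq_or_lt_of_le ht with heq | htpos
      · rw [← heq, zero_smul]
        exact mem_interior.2 ⟨ball0 X lam0 N, hballΩ, hball_open N, by
          show ‖(0 : X)‖ + |lam0 - lam0| < N
          rw [norm_zero, sub_self, abs_zero, add_zero]
          exact hN⟩
      · refine mem_interior.2 ⟨cone l 1 0, fun q hq => Or.inl (subset_closure hq), ?_, ?_⟩
        · show IsOpen {q : X × ℝ | 0 * ‖q.1‖ < 1 * l q.1}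
          exact isOpen_lt (continuous_const.mul continuous_fst.norm)
            (continuous_const.mul (l.continuous.comp continuous_fst))
        · show 0 * ‖t • v‖ < 1 * l (t • v)
          rw [zero_mul, one_mul, hlt]
          exact htpos
    exact hp2.2 hint
  · -- the intersection is the single point
    apply Set.Subset.antisymm
    · rintro p ⟨hp1, hp2⟩
      have hq1 : p ∈ Qp := hCdirp hp1
      have hq2 : p ∈ Qmbar := hCdirm hp2
      obtain ⟨t, ht, rfl⟩ := hq1
      have ht0 : t ≤ 0 := by
        have := hq2.2.2.2
        rwa [hlt] at this
      have : t = 0 := le_antisymm ht0 ht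
      rw [Set.mem_singleton_iff, this, zero_smul]
    · rintro p hp
      rw [Set.mem_singleton_iff] at hp
      rw [hp]
      have hmem : (((0 : X), lam0) : X × ℝ) ∈ closure
          ({(((0 : X), lam0) : X × ℝ)} ∪ ⋃₀ {Q | IsBranch F Ω lam0 l 1 Q}) :=
        subset_closure (Or.inl rfl)
      have hmem' : (((0 : X), lam0) : X × ℝ) ∈ closure
          ({(((0 : X), lam0) : X × ℝ)} ∪ ⋃₀ {Q | IsBranch F Ω lam0 l (-1) Q}) :=
        subset_closure (Or.inl rfl)
      exact ⟨⟨hmem, hptΩ⟩, ⟨hmem', hptΩ⟩⟩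
end
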